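/- arXiv:0906.0912 — 6 statements merged into one kernel-verified Lean document; each statement's English description precedes it below -/
import Mathlib

section
/- For every natural number n, the number of overhang paths of degree n equals (2n−1)!! = ∏_{i=1}^{n} (2i−1). -/
/-- An overhang path of degree `n`: a nonempty list of lattice points starting at
`(0,0)`, ending at `(2n,0)`, with pairwise distinct points, all points in the
quadrant `x ≥ 0, y ≥ 0`, and each step in `{(1,1), (1,-1), (-1,1)}`. -/
def IsOverhangPath (n : ℕ) (v : List (ℤ × ℤ)) : Prop :=
  v.head? = some (0, 0) ∧
  v.getLast? = some ((2 * n : ℤ), 0) ∧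
  v.Nodup ∧
  (∀ p ∈ v, 0 ≤ p.1 ∧ 0 ≤ p.2) ∧
  v.Chain' (fun a b => b - a = (1, 1) ∨ b - a = (1, -1) ∨ b - a = (-1, 1))

/-!
Along an overhang path the level `x + y` never decreases: the step `(1,1)` raises it by `2`,
the other two steps keep it. Hence a path ending at `(K + t, K - t)` is a path ending at some
`(K - 1 + s, K - 1 - s)` with `|s| ≤ K - 1`, followed by the step `(1,1)` and a walk along the
antidiagonal `x + y = 2K`. That walk moves by `±1` without revisiting a point, so it is the
monotone segment from `s` to `t`. Conversely every such concatenation is an overhang path, so the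
number of paths to a point of level `2K` is `2K - 1` (the number of choices of `s`) times the
number of paths to a point of level `2(K - 1)`, whatever the endpoint.
-/

namespace OverhangPath

/-- The list `s, s ± 1, …, t`. -/
def intSeg (s t : ℤ) : List ℤ :=
  (List.range ((t - s).natAbs + 1)).map fun i : ℕ => if s ≤ t then s + (i : ℤ) else s - i

theorem head?_intSeg (s t : ℤ) : (intSeg s t).head? = some s := by
  simp [intSeg, List.range_succ_eq_map]

theorem getLast?_intSeg (s t : ℤ) : (intSeg s t).getLast? = some t := by
  simp only [intSeg, List.range_succ, List.map_append, List.map_cons, List.map_nil,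
    List.getLast?_append, List.getLast?_singleton, Option.some_or, Option.some_inj]
  split_ifs <;> omega

theorem mem_intSeg {s t x : ℤ} : x ∈ intSeg s t ↔ min s t ≤ x ∧ x ≤ max s t := by
  simp only [intSeg, List.mem_map, List.mem_range]
  constructor
  · rintro ⟨i, hi, rfl⟩
    split_ifs <;> omega
  · intro hx
    refine ⟨(x - s).natAbs, by omega, ?_⟩
    split_ifs <;> omega

theorem nodup_intSeg (s t : ℤ) : (intSeg s t).Nodup :=
  List.nodup_range.map fun i j hij => by split_ifs at hij <;> omega

theorem isChain_intSeg (s t : ℤ) :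
    (intSeg s t).IsChain fun a b => b = a + 1 ∨ b = a - 1 := by
  rw [intSeg, List.isChain_map, List.isChain_range_succ]
  intro m _
  split_ifs <;> omega

theorem intSeg_self (s : ℤ) : intSeg s s = [s] := by
  simp [intSeg]

theorem intSeg_eq_cons_of_lt {s t : ℤ} (h : s < t) : intSeg s t = s :: intSeg (s + 1) t := by
  rw [intSeg, show (t - s).natAbs = (t - (s + 1)).natAbs + 1 by omega, List.range_succ_eq_map,
    List.map_cons, List.map_map, intSeg]
  congr 1
  · simp [h.le]
  · refine List.map_congr_left fun i hi => ?_
    rw [List.mem_range] at hi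
    simp only [Function.comp_apply]
    split_ifs <;> omega

theorem intSeg_eq_cons_of_gt {s t : ℤ} (h : t < s) : intSeg s t = s :: intSeg (s - 1) t := by
  rw [intSeg, show (t - s).natAbs = (t - (s - 1)).natAbs + 1 by omega, List.range_succ_eq_map,
    List.map_cons, List.map_map, intSeg]
  congr 1
  · simp [not_le.2 h]
  · refine List.map_congr_left fun i hi => ?_
    rw [List.mem_range] at hi
    simp only [Function.comp_apply]
    split_ifs <;> omega

theorem eq_intSeg_of_isChain_of_nodup :
    ∀ {l : List ℤ} {s t : ℤ}, l.IsChain (fun a b => b = a + 1 ∨ b = a - 1) → l.Nodup →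
      l.head? = some s → l.getLast? = some t → l = intSeg s t
  | [], _, _, _, _, hs, _ => by simp at hs
  | [x], _, _, _, _, hs, ht => by
    simp only [List.head?_cons, List.getLast?_singleton, Option.some_inj] at hs ht
    rw [← hs, ← ht, intSeg_self]
  | x :: y :: l, s, t, hc, hn, hs, ht => by
    simp only [List.head?_cons, Option.some_inj] at hs
    subst hs
    rw [List.getLast?_cons_cons] at ht
    rw [List.isChain_cons_cons] at hc
    rw [List.nodup_cons] at hn
    have ih := eq_intSeg_of_isChain_of_nodup hc.2 hn.2 rfl ht
    have hx : x ∉ intSeg y t := ih ▸ hn.1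
    rw [mem_intSeg] at hx
    rcases hc.1 with rfl | rfl
    · rw [intSeg_eq_cons_of_lt (by omega : x < t), ih]
    · rw [intSeg_eq_cons_of_gt (by omega : t < x), ih]

def Step (a b : ℤ × ℤ) : Prop :=
  b - a = (1, 1) ∨ b - a = (1, -1) ∨ b - a = (-1, 1)

def level (a : ℤ × ℤ) : ℤ := a.1 + a.2

def point (K j : ℤ) : ℤ × ℤ := (K + j, K - j)

def seg (K s t : ℤ) : List (ℤ × ℤ) := (intSeg s t).map (point K)

structure IsPathTo (e : ℤ × ℤ) (v : List (ℤ × ℤ)) : Prop where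
  head : v.head? = some (0, 0)
  getLast : v.getLast? = some e
  nodup : v.Nodup
  nonneg : ∀ a ∈ v, 0 ≤ a.1 ∧ 0 ≤ a.2
  isChain : v.IsChain Step

theorem step_iff {a b : ℤ × ℤ} :
    Step a b ↔ (b.1 = a.1 + 1 ∧ b.2 = a.2 + 1) ∨ (b.1 = a.1 + 1 ∧ b.2 = a.2 - 1) ∨
      (b.1 = a.1 - 1 ∧ b.2 = a.2 + 1) := by
  simp only [Step, Prod.ext_iff, Prod.fst_sub, Prod.snd_sub]
  omega

theorem Step.level_le {a b : ℤ × ℤ} (h : Step a b) : level a ≤ level b := by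
  rw [step_iff] at h
  unfold level
  omega

theorem Step.eq_add_of_level_lt {a b : ℤ × ℤ} (h : Step a b) (hlt : level a < level b) :
    b = a + (1, 1) := by
  rw [step_iff] at h
  unfold level at hlt
  ext <;> simp only [Prod.fst_add, Prod.snd_add] <;> omega

theorem step_point_point_iff {K i j : ℤ} :
    Step (point K i) (point K j) ↔ j = i + 1 ∨ j = i - 1 := by
  simp only [step_iff, point]
  omega

theorem level_point (K j : ℤ) : level (point K j) = 2 * K := by
  unfold level point
  ring

theorem point_injective (K : ℤ) : (point K).Injective := fun i j h => by
  simp only [point, Prod.mk.injEq] at h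
  omega

theorem point_fst_sub_of_level_eq {K : ℤ} {a : ℤ × ℤ} (h : level a = 2 * K) :
    point K (a.1 - K) = a := by
  unfold level at h
  ext <;> simp only [point] <;> omega

theorem pairwise_level_le {v : List (ℤ × ℤ)} (hv : v.IsChain Step) :
    v.Pairwise fun a b => level a ≤ level b := by
  have : (v.map level).IsChain (· ≤ ·) :=
    (List.isChain_map level).2 (hv.imp fun _ _ h => h.level_le)
  exact List.pairwise_map.1 this.pairwise

theorem level_le_of_getLast? {v : List (ℤ × ℤ)} {e a : ℤ × ℤ} (hv : v.IsChain Step)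
    (he : v.getLast? = some e) (ha : a ∈ v) : level a ≤ level e := by
  obtain ⟨w, rfl⟩ := List.getLast?_eq_some_iff.1 he
  rcases List.mem_append.1 ha with ha | ha
  · exact (List.pairwise_append.1 (pairwise_level_le hv)).2.2 a ha e (by simp)
  · rw [List.mem_singleton.1 ha]

theorem le_level_of_head? {v : List (ℤ × ℤ)} {b a : ℤ × ℤ} (hv : v.IsChain Step)
    (hb : v.head? = some b) (ha : a ∈ v) : level b ≤ level a := by
  obtain ⟨w, rfl⟩ := List.head?_eq_some_iff.1 hb
  rcases List.mem_cons.1 ha with rfl | ha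
  · exact le_rfl
  · exact (List.pairwise_cons.1 (pairwise_level_le hv)).1 a ha

theorem head?_seg (K s t : ℤ) : (seg K s t).head? = some (point K s) := by
  rw [seg, List.head?_map, head?_intSeg, Option.map_some]

theorem getLast?_seg (K s t : ℤ) : (seg K s t).getLast? = some (point K t) := by
  rw [seg, List.getLast?_map, getLast?_intSeg, Option.map_some]

theorem nodup_seg (K s t : ℤ) : (seg K s t).Nodup :=
  (nodup_intSeg s t).map (point_injective K)

theorem isChain_seg (K s t : ℤ) : (seg K s t).IsChain Step := by
  rw [seg, List.isChain_map]
  exact (isChain_intSeg s t).imp fun _ _ => step_point_point_iff.2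

theorem level_of_mem_seg {K s t : ℤ} {a : ℤ × ℤ} (ha : a ∈ seg K s t) : level a = 2 * K := by
  obtain ⟨j, -, rfl⟩ := List.mem_map.1 ha
  exact level_point K j

theorem nonneg_of_mem_seg {K s t : ℤ} (hs : |s| ≤ K) (ht : |t| ≤ K) {a : ℤ × ℤ}
    (ha : a ∈ seg K s t) : 0 ≤ a.1 ∧ 0 ≤ a.2 := by
  obtain ⟨j, hj, rfl⟩ := List.mem_map.1 ha
  rw [mem_intSeg] at hj
  rw [abs_le] at hs ht
  simp only [point]
  omega

theorem eq_seg_of_level_eq {q : List (ℤ × ℤ)} {K s t : ℤ} (hc : q.IsChain Step) (hn : q.Nodup)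
    (hlevel : ∀ a ∈ q, level a = 2 * K) (hs : q.head? = some (point K s))
    (ht : q.getLast? = some (point K t)) : q = seg K s t := by
  have hq : q = (q.map (·.1 - K)).map (point K) := by
    rw [List.map_map]
    conv_lhs => rw [← List.map_id q]
    exact List.map_congr_left fun a ha => (point_fst_sub_of_level_eq (hlevel a ha)).symm
  rw [hq] at hc hn hs ht ⊢
  rw [List.isChain_map] at hc
  rw [List.head?_map, Option.map_eq_some_iff] at hs
  rw [List.getLast?_map, Option.map_eq_some_iff] at ht
  obtain ⟨s', hs', hss'⟩ := hs
  obtain ⟨t', ht', htt'⟩ := ht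
  rw [point_injective K hss'] at hs'
  rw [point_injective K htt'] at ht'
  rw [seg, eq_intSeg_of_isChain_of_nodup (hc.imp fun _ _ => step_point_point_iff.1)
    hn.of_map hs' ht']

theorem exists_eq_append_below_level_of_getLast? {v : List (ℤ × ℤ)} {e : ℤ × ℤ}
    (hv : v.IsChain Step) (he : v.getLast? = some e) :
    ∃ p q, v = p ++ q ∧ (∀ a ∈ p, level a < level e) ∧ ∀ a ∈ q, level a = level e := by
  let below : ℤ × ℤ → Bool := fun a => level a < level e
  refine ⟨v.takeWhile below, v.dropWhile below, List.takeWhile_append_dropWhile.symm,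
    fun a ha => by simpa [below] using List.mem_takeWhile_imp ha, fun a ha => ?_⟩
  have hq : (v.dropWhile below).IsChain Step := by
    rw [← List.takeWhile_append_dropWhile (p := below) (l := v)] at hv
    exact (List.isChain_append.1 hv).2.1
  obtain ⟨b, hb⟩ := Option.isSome_iff_exists.1 (List.isSome_head?.2 (List.ne_nil_of_mem ha))
  have hbe : level e ≤ level b := by
    have := List.head?_dropWhile_not below v
    rw [hb] at this
    simpa [below] using this
  have hav : a ∈ v := (List.dropWhile_suffix below).subset ha
  exact le_antisymm (level_le_of_getLast? hv he hav) (hbe.trans (le_level_of_head? hq hb ha))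

namespace IsPathTo

variable {e : ℤ × ℤ} {v : List (ℤ × ℤ)}

theorem level_le (hv : IsPathTo e v) {a : ℤ × ℤ} (ha : a ∈ v) : level a ≤ level e :=
  level_le_of_getLast? hv.isChain hv.getLast ha

theorem of_append {p q : List (ℤ × ℤ)} {a : ℤ × ℤ} (hv : IsPathTo e (p ++ q))
    (ha : p.getLast? = some a) : IsPathTo a p where
  head := by
    rw [← List.head?_append_of_ne_nil p (List.getLast?_isSome.1 (by simp [ha]))]
    exact hv.head
  getLast := ha
  nodup := hv.nodup.sublist (List.sublist_append_left p q)
  nonneg b hb := hv.nonneg b (List.mem_append_left q hb)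
  isChain := (List.isChain_append.1 hv.isChain).1

theorem exists_eq_append_seg {k : ℕ} {t : ℤ} (hv : IsPathTo (point (k + 1) t) v) :
    ∃ s : ℤ, |s| ≤ k ∧ ∃ p, IsPathTo (point k s) p ∧ v = p ++ seg (k + 1) s t := by
  obtain ⟨p, q, rfl, hp, hq⟩ := exists_eq_append_below_level_of_getLast? hv.isChain hv.getLast
  rw [level_point] at hp hq
  obtain ⟨L, hL⟩ : ∃ L, p.getLast? = some L := by
    refine Option.isSome_iff_exists.1 (List.getLast?_isSome.2 ?_)
    rintro rfl
    have := hq (0, 0) (List.mem_of_head? hv.head)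
    simp only [level] at this
    omega
  obtain ⟨H, hH⟩ : ∃ H, q.head? = some H := by
    refine Option.isSome_iff_exists.1 (List.isSome_head?.2 ?_)
    rintro rfl
    have := hp _ (List.mem_of_getLast? (by simpa using hv.getLast))
    exact (level_point _ t ▸ this).false
  obtain ⟨-, hqc, hLH⟩ := List.isChain_append.1 hv.isChain
  set s := H.1 - (k + 1)
  have hHs : H = point (k + 1) s :=
    (point_fst_sub_of_level_eq (hq H (List.mem_of_head? hH))).symm
  have hLs : L = point k s := by
    have hHL := (hLH L hL H hH).eq_add_of_level_lt
      ((hp L (List.mem_of_getLast? hL)).trans_eq (hq H (List.mem_of_head? hH)).symm)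
    rw [hHs, Prod.ext_iff] at hHL
    simp only [point, Prod.fst_add, Prod.snd_add] at hHL
    ext <;> simp only [point] <;> omega
  have hs : |s| ≤ k := by
    have := hv.nonneg L (List.mem_append_left q (List.mem_of_getLast? hL))
    rw [hLs, point] at this
    rw [abs_le]
    omega
  refine ⟨s, hs, p, hv.of_append (hLs ▸ hL), ?_⟩
  have hqe := hv.getLast
  rw [List.getLast?_append_of_ne_nil p (List.ne_nil_of_mem (List.mem_of_head? hH))] at hqe
  rw [eq_seg_of_level_eq hqc (List.nodup_append.1 hv.nodup).2.1 hq (hHs ▸ hH) hqe]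

theorem append_seg {k : ℕ} {s t : ℤ} (hs : |s| ≤ k) (ht : |t| ≤ k + 1) {p : List (ℤ × ℤ)}
    (hp : IsPathTo (point k s) p) : IsPathTo (point (k + 1) t) (p ++ seg (k + 1) s t) where
  head := by
    rw [List.head?_append_of_ne_nil p (List.ne_nil_of_mem (List.mem_of_head? hp.head))]
    exact hp.head
  getLast := by
    rw [List.getLast?_append_of_ne_nil p (List.ne_nil_of_mem (List.mem_of_head? (head?_seg ..))),
      getLast?_seg]
  nodup := by
    refine List.nodup_append.2 ⟨hp.nodup, nodup_seg .., fun a ha b hb hab => ?_⟩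
    have := hp.level_le ha
    rw [hab, level_of_mem_seg hb, level_point] at this
    omega
  nonneg a ha := (List.mem_append.1 ha).elim (hp.nonneg a) (nonneg_of_mem_seg (by omega) ht)
  isChain := by
    refine List.isChain_append.2 ⟨hp.isChain, isChain_seg .., fun a ha b hb => ?_⟩
    rw [hp.getLast, Option.mem_def, Option.some_inj] at ha
    rw [head?_seg, Option.mem_def, Option.some_inj] at hb
    rw [← ha, ← hb, step_iff]
    simp only [point]
    omega

theorem takeWhile_append_seg {k : ℕ} {s : ℤ} {p : List (ℤ × ℤ)} (hp : IsPathTo (point k s) p)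
    (t : ℤ) : (p ++ seg (k + 1) s t).takeWhile (fun a => level a < 2 * (k + 1)) = p := by
  obtain ⟨l, hl⟩ := List.head?_eq_some_iff.1 (head?_seg (k + 1) s t)
  rw [List.takeWhile_append_of_pos, hl, List.takeWhile_cons_of_neg, List.append_nil]
  · simp [level_point]
  · intro a ha
    have := hp.level_le ha
    rw [level_point] at this
    simp only [decide_eq_true_eq]
    omega

theorem eq_of_append_seg_eq {k : ℕ} {s s' t : ℤ} {p p' : List (ℤ × ℤ)}
    (hp : IsPathTo (point k s) p) (hp' : IsPathTo (point k s') p')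
    (h : p ++ seg (k + 1) s t = p' ++ seg (k + 1) s' t) : s = s' ∧ p = p' := by
  have hpp' : p = p' := by
    rw [← hp.takeWhile_append_seg t, h, hp'.takeWhile_append_seg]
  subst hpp'
  exact ⟨point_injective k (Option.some_injective _ (hp.getLast.symm.trans hp'.getLast)), rfl⟩

end IsPathTo

noncomputable def appendSegEquiv (k : ℕ) {t : ℤ} (ht : |t| ≤ k + 1) :
    (Σ s : Finset.Icc (-k : ℤ) k, {p // IsPathTo (point k s) p}) ≃
      {v // IsPathTo (point (k + 1) t) v} :=
  Equiv.ofBijective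
    (fun x => ⟨x.2.1 ++ seg (k + 1) x.1 t,
      x.2.2.append_seg (abs_le.2 (Finset.mem_Icc.1 x.1.2)) ht⟩)
    ⟨fun ⟨⟨_, _⟩, ⟨_, hp⟩⟩ ⟨⟨_, _⟩, ⟨_, hp'⟩⟩ h => by
      obtain ⟨rfl, rfl⟩ := hp.eq_of_append_seg_eq hp' (congrArg Subtype.val h)
      rfl,
    fun ⟨_, hv⟩ => by
      obtain ⟨s, hs, p, hp, rfl⟩ := hv.exists_eq_append_seg
      exact ⟨⟨⟨s, Finset.mem_Icc.2 (abs_le.1 hs)⟩, p, hp⟩, rfl⟩⟩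

theorem isPathTo_zero_iff {v : List (ℤ × ℤ)} : IsPathTo (0, 0) v ↔ v = [(0, 0)] := by
  constructor
  · intro hv
    obtain ⟨l, rfl⟩ := List.head?_eq_some_iff.1 hv.head
    cases l with
    | nil => rfl
    | cons b l =>
      have := hv.getLast
      rw [List.getLast?_cons_cons] at this
      exact ((List.nodup_cons.1 hv.nodup).1 (List.mem_of_getLast? this)).elim
  · rintro rfl
    exact ⟨rfl, rfl, List.nodup_singleton _, by simp, List.isChain_singleton _⟩

theorem card_isPathTo_point (k : ℕ) {t : ℤ} (ht : |t| ≤ k) :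
    Nat.card {v // IsPathTo (point k t) v} = ∏ i ∈ Finset.Icc 1 k, (2 * i - 1) := by
  induction k generalizing t with
  | zero =>
    obtain rfl : t = 0 := abs_nonpos_iff.1 (by exact_mod_cast ht)
    simp [point, isPathTo_zero_iff]
  | succ k ih =>
    have hfiber (s : Finset.Icc (-k : ℤ) k) :
        Nat.card {p // IsPathTo (point k s) p} = ∏ i ∈ Finset.Icc 1 k, (2 * i - 1) :=
      ih (abs_le.2 (Finset.mem_Icc.1 s.2))
    have hprod : ∏ i ∈ Finset.Icc 1 k, (2 * i - 1) ≠ 0 :=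
      Finset.prod_ne_zero_iff.2 fun i hi => by
        rw [Finset.mem_Icc] at hi
        omega
    have (s : Finset.Icc (-k : ℤ) k) : Finite {p // IsPathTo (point k s) p} :=
      Nat.finite_of_card_ne_zero (hfiber s ▸ hprod)
    push_cast at ht ⊢
    rw [← Nat.card_congr (appendSegEquiv k ht), Nat.card_sigma,
      Finset.sum_congr rfl fun s _ => hfiber s, Finset.sum_const, Finset.card_univ,
      Fintype.card_coe, Int.card_Icc, Finset.prod_Icc_succ_top (by omega), smul_eq_mul]
    rw [show (k + 1 - -k : ℤ).toNat = 2 * (k + 1) - 1 by omega, mul_comm]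

end OverhangPath

/-- The number of overhang paths of degree `n` is `(2n-1)!! = ∏_{i=1}^n (2i-1)`. -/
theorem card_overhangPaths (n : ℕ) :
    Nat.card {v : List (ℤ × ℤ) // IsOverhangPath n v} =
      ∏ i ∈ Finset.Icc 1 n, (2 * i - 1) := by
  have hpath (v : List (ℤ × ℤ)) :
      IsOverhangPath n v ↔ OverhangPath.IsPathTo (OverhangPath.point n n) v := by
    rw [show OverhangPath.point n n = ((2 * n : ℤ), 0) by rw [OverhangPath.point]; congr 1 <;> ring]
    exact ⟨fun ⟨h₁, h₂, h₃, h₄, h₅⟩ => ⟨h₁, h₂, h₃, h₄, h₅⟩, fun h => ⟨h.1, h.2, h.3, h.4, h.5⟩⟩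
  rw [Nat.card_congr (Equiv.subtypeEquivRight hpath)]
  exact OverhangPath.card_isPathTo_point n (by simp)
end

section
/- For every natural number n, the cardinality of O_n equals (2n−1)!! = ∏_{i=1}^{n} (2i−1). -/
/-- A path in `O_n`: a list of lattice points starting at `(0,0)`, ending at `(n,n)`,
with pairwise distinct points, every point `(x,y)` satisfying `x ≤ y` and `-y ≤ x`,
and each step in `{(1,0), (0,1), (-1,0)}`. -/
def IsOPath (n : ℕ) (v : List (ℤ × ℤ)) : Prop :=
  v.head? = some (0, 0) ∧
  v.getLast? = some ((n : ℤ), (n : ℤ)) ∧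
  v.Nodup ∧
  (∀ p ∈ v, p.1 ≤ p.2 ∧ -p.2 ≤ p.1) ∧
  v.Chain' (fun a b => b - a = (1, 0) ∨ b - a = (0, 1) ∨ b - a = (-1, 0))

/-!
Steps never go down, so a path visits the rows `y = 0, 1, …, n` in this order, and being
self-avoiding it cannot turn back inside a row: its part on row `y` is the segment between the
column where it enters the row and the column where it leaves it. Hence a path ending at
`(c, k + 1)` is a path ending at some `(c', k)` with `|c'| ≤ k`, followed by the segment of row
`k + 1` from `c'` to `c`. By induction, the number of paths ending at `(c, k)` is the same for
all `|c| ≤ k`, and it is multiplied by `2k + 1` when passing from row `k` to row `k + 1`.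
-/

theorem List.filter_append_filter_not_of_pairwise {α : Type*} {p : α → Bool} :
    ∀ {l : List α}, l.Pairwise (fun a b => p b → p a) → l.filter p ++ l.filter (! p ·) = l
  | [], _ => rfl
  | a :: l, h => by
    rw [List.pairwise_cons] at h
    have ih := filter_append_filter_not_of_pairwise h.2
    by_cases ha : p a
    · simp [ha, ih]
    · have hl : l.filter p = [] := List.filter_eq_nil_iff.2 fun b hb hpb => ha (h.1 b hb hpb)
      rw [hl, List.nil_append] at ih
      simp [ha, hl, ih]

namespace LatticePath

def IsStep (u w : ℤ × ℤ) : Prop :=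
  w - u = (1, 0) ∨ w - u = (0, 1) ∨ w - u = (-1, 0)

theorem isStep_iff {u w : ℤ × ℤ} :
    IsStep u w ↔ (w.1 = u.1 + 1 ∧ w.2 = u.2) ∨ (w.1 = u.1 ∧ w.2 = u.2 + 1) ∨
      (w.1 = u.1 - 1 ∧ w.2 = u.2) := by
  simp only [IsStep, Prod.ext_iff, Prod.fst_sub, Prod.snd_sub]
  omega

theorem IsStep.snd_le {u w : ℤ × ℤ} (h : IsStep u w) : u.2 ≤ w.2 := by
  rcases isStep_iff.1 h with h | h | h <;> omega

def rowSeg (y a b : ℤ) : List (ℤ × ℤ) :=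
  if a = b then [(a, y)]
  else if a < b then (a, y) :: rowSeg y (a + 1) b
  else (a, y) :: rowSeg y (a - 1) b
termination_by (b - a).natAbs

theorem head?_rowSeg (y a b : ℤ) : (rowSeg y a b).head? = some (a, y) := by
  rw [rowSeg]; split_ifs <;> rfl

theorem getLast?_rowSeg (y a b : ℤ) : (rowSeg y a b).getLast? = some (b, y) := by
  fun_induction rowSeg y a b <;> simp_all [List.getLast?_cons]

theorem mem_rowSeg {y a b : ℤ} {q : ℤ × ℤ} :
    q ∈ rowSeg y a b ↔ q.2 = y ∧ (a ≤ q.1 ∧ q.1 ≤ b ∨ b ≤ q.1 ∧ q.1 ≤ a) := by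
  fun_induction rowSeg y a b <;> grind

theorem nodup_rowSeg (y a b : ℤ) : (rowSeg y a b).Nodup := by
  fun_induction rowSeg y a b <;> grind [mem_rowSeg]

theorem isChain_rowSeg (y a b : ℤ) : (rowSeg y a b).IsChain IsStep := by
  fun_induction rowSeg y a b <;> simp_all [List.isChain_cons, head?_rowSeg, isStep_iff]

theorem rowSeg_of_lt {y a b : ℤ} (h : a < b) : rowSeg y a b = (a, y) :: rowSeg y (a + 1) b := by
  rw [rowSeg, if_neg h.ne, if_pos h]

theorem rowSeg_of_gt {y a b : ℤ} (h : b < a) : rowSeg y a b = (a, y) :: rowSeg y (a - 1) b := by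
  rw [rowSeg, if_neg h.ne', if_neg h.not_gt]

theorem eq_rowSeg_of_isChain {y : ℤ} : ∀ {r : List (ℤ × ℤ)} {a : ℤ}, r.IsChain IsStep →
    r.Nodup → (∀ q ∈ r, q.2 = y) → r.head? = some (a, y) → ∃ b, r = rowSeg y a b
  | [], _, _, _, _, h => by simp at h
  | [q], a, _, _, _, h => ⟨a, by simp_all [rowSeg]⟩
  | q :: q' :: r, a, hc, hn, hy, h => by
    have hq' : q'.2 = y := hy q' (by simp)
    obtain ⟨b, hb⟩ := eq_rowSeg_of_isChain (a := q'.1) (List.isChain_cons_cons.1 hc).2 hn.of_cons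
      (fun q hq => hy q (List.mem_cons_of_mem _ hq)) (by simp [← hq'])
    obtain rfl : q = (a, y) := by simpa using h
    have hstep := isStep_iff.1 (List.isChain_cons_cons.1 hc).1
    have hnot : (a, y) ∉ rowSeg y q'.1 b := hb ▸ (List.nodup_cons.1 hn).1
    rw [mem_rowSeg] at hnot
    refine ⟨b, ?_⟩
    rcases lt_trichotomy a b with hab | rfl | hab
    · rw [rowSeg_of_lt hab, hb, show q'.1 = a + 1 by dsimp only at hstep hnot; omega]
    · dsimp only at hnot; omega
    · rw [rowSeg_of_gt hab, hb, show q'.1 = a - 1 by dsimp only at hstep hnot; omega]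

theorem pairwise_snd_le_of_isChain {v : List (ℤ × ℤ)} (hv : v.IsChain IsStep) :
    v.Pairwise (·.2 ≤ ·.2) :=
  List.pairwise_map.1 ((List.isChain_map Prod.snd).2 (hv.imp fun _ _ h => h.snd_le)).pairwise

theorem snd_le_of_getLast? {v : List (ℤ × ℤ)} {t q : ℤ × ℤ} (hv : v.IsChain IsStep)
    (ht : v.getLast? = some t) (hq : q ∈ v) : q.2 ≤ t.2 := by
  obtain ⟨l, rfl⟩ := List.getLast?_eq_some_iff.1 ht
  rcases List.mem_append.1 hq with hq | hq
  · exact (List.pairwise_append.1 (pairwise_snd_le_of_isChain hv)).2.2 _ hq _ (by simp)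
  · simp_all

structure IsConePath (t : ℤ × ℤ) (v : List (ℤ × ℤ)) : Prop where
  head? : v.head? = some (0, 0)
  getLast? : v.getLast? = some t
  nodup : v.Nodup
  mem_cone : ∀ q ∈ v, q.1 ≤ q.2 ∧ -q.2 ≤ q.1
  isChain : v.IsChain IsStep

namespace IsConePath

variable {t : ℤ × ℤ} {v : List (ℤ × ℤ)}

theorem snd_le (hv : IsConePath t v) {q : ℤ × ℤ} (hq : q ∈ v) : q.2 ≤ t.2 :=
  snd_le_of_getLast? hv.isChain hv.getLast? hq

theorem append_rowSeg {k c c' : ℤ} {p : List (ℤ × ℤ)} (hp : IsConePath (c', k) p)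
    (hc : -(k + 1) ≤ c ∧ c ≤ k + 1) : IsConePath (c, k + 1) (p ++ rowSeg (k + 1) c' c) := by
  have hc' := hp.mem_cone _ (List.mem_of_getLast? hp.getLast?)
  refine ⟨?_, ?_, ?_, ?_, ?_⟩
  · simp [hp.head?]
  · simp [getLast?_rowSeg]
  · refine List.nodup_append.2 ⟨hp.nodup, nodup_rowSeg _ _ _, fun q hq q' hq' h => ?_⟩
    have := hp.snd_le hq
    rw [mem_rowSeg] at hq'
    subst h; dsimp only at this; omega
  · intro q hq
    rcases List.mem_append.1 hq with hq | hq
    · exact hp.mem_cone q hq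
    · rw [mem_rowSeg] at hq; dsimp only at hc'; omega
  · refine hp.isChain.append (isChain_rowSeg _ _ _) ?_
    simp [hp.getLast?, head?_rowSeg, isStep_iff]

theorem filter_append_rowSeg {k c c' : ℤ} {p : List (ℤ × ℤ)} (hp : IsConePath (c', k) p) :
    (p ++ rowSeg (k + 1) c' c).filter (·.2 ≤ k) = p := by
  rw [List.filter_append, List.filter_eq_self.2, List.filter_eq_nil_iff.2, List.append_nil]
  · intro q hq; rw [mem_rowSeg] at hq; simp only [decide_eq_true_eq, not_le]; omega
  · intro q hq; simpa using hp.snd_le hq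

theorem exists_eq_append_rowSeg {k c : ℤ} (hk : 0 ≤ k) (hv : IsConePath (c, k + 1) v) :
    ∃ c' p, IsConePath (c', k) p ∧ v = p ++ rowSeg (k + 1) c' c := by
  set p := v.filter (·.2 ≤ k)
  set r := v.filter (fun q => !decide (q.2 ≤ k))
  have hsplit : p ++ r = v := List.filter_append_filter_not_of_pairwise
    ((pairwise_snd_le_of_isChain hv.isChain).imp fun h => by simp only [decide_eq_true_eq]; omega)
  have hr : ∀ q ∈ r, q.2 = k + 1 := fun q hq => by
    simp only [r, List.mem_filter] at hq
    have := hv.snd_le hq.1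
    simp only [Bool.not_eq_eq_eq_not, Bool.not_true, decide_eq_false_iff_not] at hq; omega
  have hp : p ≠ [] := List.ne_nil_of_mem (a := (0, 0))
    (List.mem_filter.2 ⟨List.mem_of_head? hv.head?, by simpa using hk⟩)
  have hr' : r ≠ [] := List.ne_nil_of_mem (a := (c, k + 1))
    (List.mem_filter.2 ⟨List.mem_of_getLast? hv.getLast?, by simp⟩)
  obtain ⟨hpc, hrc, hpr⟩ := List.isChain_append.1 (hsplit ▸ hv.isChain)
  obtain ⟨u, hu⟩ : ∃ u, p.getLast? = some u := ⟨_, List.getLast?_eq_some_getLast hp⟩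
  obtain ⟨w, hw⟩ : ∃ w, r.head? = some w := ⟨_, List.head?_eq_some_head hr'⟩
  have hvert : u.2 = k ∧ w = (u.1, k + 1) := by
    have h₁ := hr _ (List.mem_of_head? hw)
    have h₂ := (List.mem_filter.1 (List.mem_of_getLast? hu)).2
    have := isStep_iff.1 (hpr u hu w hw)
    simp only [decide_eq_true_eq] at h₂; rw [Prod.ext_iff]; omega
  obtain ⟨b, hb⟩ := eq_rowSeg_of_isChain hrc (hv.nodup.sublist List.filter_sublist) hr
    (hvert.2 ▸ hw)
  have hbc : b = c := by
    have := hv.getLast?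
    rw [← hsplit, List.getLast?_append, hb, getLast?_rowSeg] at this
    simpa using this
  refine ⟨u.1, p, ⟨?_, ?_, hv.nodup.sublist List.filter_sublist,
    fun q hq => hv.mem_cone q (List.mem_of_mem_filter hq), hpc⟩, by rw [← hbc, ← hb, hsplit]⟩
  · rw [← hv.head?, ← hsplit, List.head?_append_of_ne_nil _ hp]
  · rw [hu, ← hvert.1]

end IsConePath

theorem isConePath_origin_iff {v : List (ℤ × ℤ)} : IsConePath (0, 0) v ↔ v = [(0, 0)] := by
  refine ⟨fun hv => ?_, fun h => h ▸ ⟨rfl, rfl, List.nodup_singleton _, by simp,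
    List.isChain_singleton _⟩⟩
  obtain ⟨b, rfl⟩ := eq_rowSeg_of_isChain hv.isChain hv.nodup
    (fun q hq => by have := hv.snd_le hq; have := hv.mem_cone q hq; dsimp only at *; omega) hv.head?
  obtain rfl : b = 0 := by simpa [getLast?_rowSeg] using hv.getLast?
  rw [rowSeg, if_pos rfl]

theorem card_isConePath_succ {k c : ℤ} (hk : 0 ≤ k) (hc : -(k + 1) ≤ c ∧ c ≤ k + 1) :
    Nat.card {v // IsConePath (c, k + 1) v} =
      Nat.card (Σ c' : Finset.Icc (-k) k, {p // IsConePath (c', k) p}) := by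
  refine (Nat.card_eq_of_bijective
    (fun x => ⟨x.2.1 ++ rowSeg (k + 1) x.1 c, x.2.2.append_rowSeg hc⟩) ⟨?_, ?_⟩).symm
  · rintro ⟨c₁, p₁, hp₁⟩ ⟨c₂, p₂, hp₂⟩ h
    obtain rfl : p₁ = p₂ := by
      simpa [hp₁.filter_append_rowSeg, hp₂.filter_append_rowSeg] using
        congrArg (fun v => v.1.filter (·.2 ≤ k)) h
    obtain rfl : c₁ = c₂ := Subtype.ext (by simpa using hp₁.getLast?.symm.trans hp₂.getLast?)
    rfl
  · rintro ⟨v, hv⟩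
    obtain ⟨c', p, hp, rfl⟩ := hv.exists_eq_append_rowSeg hk
    have := hp.mem_cone _ (List.mem_of_getLast? hp.getLast?)
    exact ⟨⟨⟨c', Finset.mem_Icc.2 (by dsimp only at this; omega)⟩, p, hp⟩, rfl⟩

theorem card_isConePath (k : ℕ) {c : ℤ} (hc : -k ≤ c ∧ c ≤ k) :
    Nat.card {v // IsConePath (c, k) v} = ∏ i ∈ Finset.Icc 1 k, (2 * i - 1) := by
  induction k generalizing c with
  | zero =>
    obtain rfl : c = 0 := by push_cast at hc; omega
    simp [isConePath_origin_iff]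
  | succ k ih =>
    have hfin (c' : Finset.Icc (-k : ℤ) k) : Finite {p // IsConePath (c', k) p} := by
      have := Finset.mem_Icc.1 c'.2
      refine Nat.finite_of_card_ne_zero ?_
      rw [ih this]
      exact Finset.prod_ne_zero_iff.2 fun i hi => by rw [Finset.mem_Icc] at hi; omega
    push_cast
    rw [card_isConePath_succ (by omega) hc, Nat.card_sigma,
      Finset.sum_congr rfl fun c' _ => ih (Finset.mem_Icc.1 c'.2), Finset.sum_const,
      Finset.card_univ, Fintype.card_coe, Int.card_Icc, smul_eq_mul,
      Finset.prod_Icc_succ_top (by omega), mul_comm]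
    congr 1
    omega

theorem isOPath_iff_isConePath {n : ℕ} {v : List (ℤ × ℤ)} :
    IsOPath n v ↔ IsConePath (n, n) v :=
  ⟨fun ⟨h₁, h₂, h₃, h₄, h₅⟩ => ⟨h₁, h₂, h₃, h₄, h₅⟩, fun h => ⟨h.1, h.2, h.3, h.4, h.5⟩⟩

end LatticePath

open LatticePath in
/-- The number of paths in `O_n` is `(2n-1)!! = ∏_{i=1}^n (2i-1)`. -/
theorem card_OPaths (n : ℕ) :
    Nat.card {v : List (ℤ × ℤ) // IsOPath n v} =
      ∏ i ∈ Finset.Icc 1 n, (2 * i - 1) := by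
  rw [← card_isConePath n ⟨by omega, le_rfl⟩]
  exact Nat.card_congr (Equiv.subtypeEquivRight fun _ => isOPath_iff_isConePath)
end

section
/- Every path in O_n contains exactly n steps equal to (0,1), and the map sending a path in O_n to the n-tuple (c_1, …, c_n) ∈ ℤ^n, where c_i is the x-coordinate of the starting point of the i-th step equal to (0,1) (in order along the path), is a bijection from O_n onto the set of n-tuples (c_1, …, c_n) ∈ ℤ^n satisfying 1 − i ≤ c_i ≤ i − 1 for each i. -/
/-- The `x`-coordinates of starting points of the `(0,1)`-steps of a path, in order. -/
def upStepStarts (v : List (ℤ × ℤ)) : List ℤ :=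
  ((v.zip v.tail).filter (fun p => decide (p.2 - p.1 = (0, 1)))).map (fun p => p.1.1)

/-!
A walk with steps `(1,0)`, `(0,1)`, `(-1,0)` that never revisits a point cannot turn back within
a row, so on each height `y` it runs monotonically from the point where it entered that row to the
point where it leaves it. It is therefore determined by the `x`-coordinates `c_1, …, c_n` of its
up-steps, and conversely every integer sequence yields such a walk from `(0,0)` to `(n,n)`. As each
row is the segment between its two endpoints, the walk stays in the cone `|x| ≤ y` exactly when
every endpoint does, i.e. when `|c_i| ≤ i - 1`.
-/

def intervalWalk (a b : ℤ) : List ℤ :=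
  if a = b then [a]
  else if a < b then a :: intervalWalk (a + 1) b
  else a :: intervalWalk (a - 1) b
termination_by (b - a).natAbs

namespace intervalWalk

theorem ne_nil (a b : ℤ) : intervalWalk a b ≠ [] := by
  rw [intervalWalk]; split_ifs <;> simp

theorem head? (a b : ℤ) : (intervalWalk a b).head? = some a := by
  rw [intervalWalk]; split_ifs <;> simp

theorem getLast? (a b : ℤ) : (intervalWalk a b).getLast? = some b := by
  induction a using intervalWalk.induct b with
  | case1 => simp [intervalWalk]
  | case2 a hne hlt ih | case3 a hne hlt ih =>
    rw [intervalWalk]; simp [hne, hlt, List.getLast?_cons, ih]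

theorem self (a : ℤ) : intervalWalk a a = [a] := by
  rw [intervalWalk, if_pos rfl]

theorem mem_iff {a b x : ℤ} : x ∈ intervalWalk a b ↔ min a b ≤ x ∧ x ≤ max a b := by
  induction a using intervalWalk.induct b with
  | case1 => simp [intervalWalk]; omega
  | case2 a hne hlt ih | case3 a hne hlt ih =>
    rw [intervalWalk]; simp only [hne, hlt, if_false, if_true, List.mem_cons, ih]; omega

theorem nodup (a b : ℤ) : (intervalWalk a b).Nodup := by
  induction a using intervalWalk.induct b with
  | case1 => simp [intervalWalk]
  | case2 a hne hlt ih | case3 a hne hlt ih =>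
    rw [intervalWalk]; simp only [hne, hlt, if_false, if_true, List.nodup_cons, mem_iff]
    exact ⟨by omega, ih⟩

theorem isChain (a b : ℤ) : (intervalWalk a b).IsChain (fun x y => y = x + 1 ∨ y = x - 1) := by
  induction a using intervalWalk.induct b with
  | case1 => simp [intervalWalk]
  | case2 a hne hlt ih | case3 a hne hlt ih =>
    rw [intervalWalk]; simp only [hne, hlt, if_false, if_true]
    refine List.isChain_cons.2 ⟨fun y hy => ?_, ih⟩
    rw [head?] at hy
    cases hy
    omega

theorem cons_eq {a a' b : ℤ} (hnot : a ∉ intervalWalk a' b) (hstep : a' = a + 1 ∨ a' = a - 1) :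
    a :: intervalWalk a' b = intervalWalk a b := by
  rw [mem_iff] at hnot
  conv_rhs => rw [intervalWalk]
  rcases hstep with rfl | rfl
  · rw [if_neg (by omega), if_pos (by omega)]
  · rw [if_neg (by omega), if_neg (by omega)]

end intervalWalk

def Step (p q : ℤ × ℤ) : Prop := q - p = (1, 0) ∨ q - p = (0, 1) ∨ q - p = (-1, 0)

theorem step_iff {a y : ℤ} {q : ℤ × ℤ} :
    Step (a, y) q ↔ q = (a + 1, y) ∨ q = (a, y + 1) ∨ q = (a - 1, y) := by
  obtain ⟨x, z⟩ := q
  simp only [Step, Prod.mk_sub_mk, Prod.mk.injEq]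
  omega

def row (y a b : ℤ) : List (ℤ × ℤ) := (intervalWalk a b).map (·, y)

namespace row

variable {y a b : ℤ}

theorem ne_nil : row y a b ≠ [] := by simp [row, intervalWalk.ne_nil]

theorem head? : (row y a b).head? = some (a, y) := by simp [row, intervalWalk.head?]

theorem getLast? : (row y a b).getLast? = some (b, y) := by simp [row, intervalWalk.getLast?]

theorem mem_iff {p : ℤ × ℤ} : p ∈ row y a b ↔ p.2 = y ∧ min a b ≤ p.1 ∧ p.1 ≤ max a b := by
  obtain ⟨x, z⟩ := p
  simp only [row, List.mem_map, Prod.mk.injEq, ← intervalWalk.mem_iff]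
  constructor
  · rintro ⟨x, hx, rfl, rfl⟩; exact ⟨rfl, hx⟩
  · rintro ⟨rfl, hx⟩; exact ⟨x, hx, rfl, rfl⟩

theorem nodup : (row y a b).Nodup :=
  (intervalWalk.nodup a b).map fun _ _ h => congrArg Prod.fst h

theorem isChain_step : (row y a b).IsChain Step := by
  rw [row, List.isChain_map]
  refine (intervalWalk.isChain a b).imp fun x x' h => ?_
  rcases h with rfl | rfl
  · left; simp
  · right; right; simp

theorem cons_eq {a' : ℤ} (hnot : (a, y) ∉ row y a' b) (hstep : a' = a + 1 ∨ a' = a - 1) :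
    (a, y) :: row y a' b = row y a b := by
  have hnot' : a ∉ intervalWalk a' b := by rw [intervalWalk.mem_iff]; simpa [mem_iff] using hnot
  simp only [row, ← intervalWalk.cons_eq hnot' hstep, List.map_cons]

theorem abs_fst_le_snd_of_mem {p : ℤ × ℤ} (ha : |a| ≤ y) (hb : |b| ≤ y) (hp : p ∈ row y a b) :
    |p.1| ≤ p.2 := by
  obtain ⟨hy, hmin, hmax⟩ := mem_iff.1 hp
  rw [abs_le] at ha hb ⊢
  omega

end row

theorem upStepStarts_cons_cons (p q : ℤ × ℤ) (l : List (ℤ × ℤ)) :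
    upStepStarts (p :: q :: l) =
      (if q - p = (0, 1) then [p.1] else []) ++ upStepStarts (q :: l) := by
  simp only [upStepStarts, List.tail_cons, List.zip_cons_cons, List.filter_cons]
  split_ifs <;> simp_all

theorem upStepStarts_append {l₁ l₂ : List (ℤ × ℤ)} {p q : ℤ × ℤ}
    (h₁ : l₁.getLast? = some p) (h₂ : l₂.head? = some q) :
    upStepStarts (l₁ ++ l₂) =
      upStepStarts l₁ ++ (if q - p = (0, 1) then [p.1] else []) ++ upStepStarts l₂ := by
  induction l₁ with
  | nil => simp at h₁
  | cons x t ih =>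
    cases t with
    | nil =>
      obtain rfl : x = p := by simpa using h₁
      obtain ⟨q', l₂, rfl⟩ := List.exists_cons_of_ne_nil (show l₂ ≠ [] by rintro rfl; simp at h₂)
      obtain rfl : q' = q := by simpa using h₂
      rw [List.singleton_append, upStepStarts_cons_cons]
      simp [upStepStarts]
    | cons z t =>
      rw [List.getLast?_cons_cons] at h₁
      simp only [List.cons_append] at ih ⊢
      simp [upStepStarts_cons_cons, ih h₁]

theorem upStepStarts_eq_nil_of_forall_snd_eq {l : List (ℤ × ℤ)} {y : ℤ} (h : ∀ p ∈ l, p.2 = y) :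
    upStepStarts l = [] := by
  simp only [upStepStarts, List.map_eq_nil_iff, List.filter_eq_nil_iff, decide_eq_true_eq]
  rintro ⟨p, q⟩ hpq hstep
  have hp := h p (List.of_mem_zip hpq).1
  have hq := h q (List.mem_of_mem_tail (List.of_mem_zip hpq).2)
  have := congrArg Prod.snd hstep
  simp only [Prod.snd_sub] at this
  omega

theorem upStepStarts_row (y a b : ℤ) : upStepStarts (row y a b) = [] :=
  upStepStarts_eq_nil_of_forall_snd_eq fun _ hp => (row.mem_iff.1 hp).1

def walkOfStarts (e : ℤ) : ℤ → ℤ → List ℤ → List (ℤ × ℤ)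
  | y, a, [] => row y a e
  | y, a, b :: cs => row y a b ++ walkOfStarts e (y + 1) b cs

namespace walkOfStarts

variable {e : ℤ}

theorem ne_nil (y a : ℤ) (cs : List ℤ) : walkOfStarts e y a cs ≠ [] := by
  cases cs <;> simp [walkOfStarts, row.ne_nil]

theorem head? (y a : ℤ) (cs : List ℤ) : (walkOfStarts e y a cs).head? = some (a, y) := by
  cases cs <;> simp [walkOfStarts, List.head?_append_of_ne_nil _ row.ne_nil, row.head?]

theorem getLast? : ∀ (y a : ℤ) (cs : List ℤ),
    (walkOfStarts e y a cs).getLast? = some (e, y + cs.length)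
  | y, a, [] => by simp [walkOfStarts, row.getLast?]
  | y, a, b :: cs => by
    rw [walkOfStarts, List.getLast?_append_of_ne_nil _ (ne_nil _ _ _), getLast? (y + 1) b cs]
    simp only [List.length_cons, Nat.cast_add, Nat.cast_one]
    ring_nf

theorem le_snd_of_mem : ∀ {y a : ℤ} {cs : List ℤ} {p : ℤ × ℤ}, p ∈ walkOfStarts e y a cs → y ≤ p.2
  | y, a, [], p, h => (row.mem_iff.1 h).1.ge
  | y, a, b :: cs, p, h => by
    rcases List.mem_append.1 h with h | h
    · exact (row.mem_iff.1 h).1.ge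
    · linarith [le_snd_of_mem h]

theorem upStepStarts_eq : ∀ (y a : ℤ) (cs : List ℤ), upStepStarts (walkOfStarts e y a cs) = cs
  | y, a, [] => upStepStarts_row y a e
  | y, a, b :: cs => by
    rw [walkOfStarts, upStepStarts_append row.getLast? (head? _ _ _), upStepStarts_row,
      upStepStarts_eq]
    simp

theorem cons_eq_of_horizontal {y a a' : ℤ} {cs : List ℤ} (hnot : (a, y) ∉ walkOfStarts e y a' cs)
    (hstep : a' = a + 1 ∨ a' = a - 1) :
    (a, y) :: walkOfStarts e y a' cs = walkOfStarts e y a cs := by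
  cases cs with
  | nil => exact row.cons_eq hnot hstep
  | cons b cs =>
    simp only [walkOfStarts, List.mem_append, not_or] at hnot ⊢
    rw [← List.cons_append, row.cons_eq hnot.1 hstep]

theorem cons_eq_of_vertical (y a : ℤ) (cs : List ℤ) :
    (a, y) :: walkOfStarts e (y + 1) a cs = walkOfStarts e y a (a :: cs) := by
  simp [walkOfStarts, row, intervalWalk.self]

theorem nodup : ∀ (y a : ℤ) (cs : List ℤ), (walkOfStarts e y a cs).Nodup
  | y, a, [] => row.nodup
  | y, a, b :: cs => row.nodup.append (nodup (y + 1) b cs) fun _p hrow hrest => by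
    have := le_snd_of_mem hrest
    rw [(row.mem_iff.1 hrow).1] at this
    omega

theorem isChain_step : ∀ (y a : ℤ) (cs : List ℤ), (walkOfStarts e y a cs).IsChain Step
  | y, a, [] => row.isChain_step
  | y, a, b :: cs => by
    refine List.isChain_append.2 ⟨row.isChain_step, isChain_step (y + 1) b cs, ?_⟩
    rw [row.getLast?, head?]
    rintro _ ⟨⟩ _ ⟨⟩
    exact step_iff.2 (.inr (.inl rfl))

theorem abs_fst_le_snd_of_mem : ∀ {y a : ℤ} {cs : List ℤ}, |a| ≤ y →
    (∀ i (h : i < cs.length), |cs[i]| ≤ y + i) → |e| ≤ y + cs.length →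
    ∀ p ∈ walkOfStarts e y a cs, |p.1| ≤ p.2
  | y, a, [], ha, _, he, p, hp => row.abs_fst_le_snd_of_mem ha (by simpa using he) hp
  | y, a, b :: cs, ha, hcs, he, p, hp => by
    have hb : |b| ≤ y := by
      have := hcs 0 (by simp)
      rwa [List.getElem_cons_zero, Nat.cast_zero, add_zero] at this
    rcases List.mem_append.1 hp with hp | hp
    · exact row.abs_fst_le_snd_of_mem ha hb hp
    · refine abs_fst_le_snd_of_mem (hb.trans (by linarith)) (fun i h => ?_) ?_ p hp
      · have := hcs (i + 1) (by simpa using h)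
        rw [List.getElem_cons_succ] at this
        convert this using 1
        push_cast
        ring
      · simp only [List.length_cons, Nat.cast_add, Nat.cast_one] at he
        linarith

theorem getElem_mem : ∀ {y a : ℤ} {cs : List ℤ} (i : ℕ) (h : i < cs.length),
    (cs[i], y + i) ∈ walkOfStarts e y a cs
  | y, a, b :: cs, 0, _ => by
    simp [walkOfStarts, row.mem_iff]
  | y, a, b :: cs, i + 1, h => by
    have := getElem_mem (y := y + 1) (a := b) i (by simpa using h)
    simp only [walkOfStarts, List.mem_append, List.getElem_cons_succ, Nat.cast_add,
      Nat.cast_one]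
    right
    convert this using 2
    ring

end walkOfStarts

theorem exists_eq_walkOfStarts : ∀ {v : List (ℤ × ℤ)} {y a e z : ℤ},
    v.head? = some (a, y) → v.getLast? = some (e, z) → v.Nodup → v.IsChain Step →
    ∃ cs, v = walkOfStarts e y a cs
  | [], _, _, _, _, hhead, _, _, _ => by simp at hhead
  | [p], y, a, e, z, hhead, hlast, _, _ => by
    obtain rfl : p = (a, y) := by simpa using hhead
    obtain rfl : a = e := by simpa using congrArg (Option.map Prod.fst) hlast
    exact ⟨[], by simp [walkOfStarts, row, intervalWalk.self]⟩
  | p :: q :: l, y, a, e, z, hhead, hlast, hnd, hch => by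
    obtain rfl : p = (a, y) := by simpa using hhead
    obtain ⟨cs, hc⟩ := exists_eq_walkOfStarts (v := q :: l) (y := q.2) (a := q.1) rfl
      (by rwa [List.getLast?_cons_cons] at hlast) hnd.of_cons hch.of_cons
    have hnot : (a, y) ∉ walkOfStarts e q.2 q.1 cs := hc ▸ (List.nodup_cons.1 hnd).1
    rcases step_iff.1 (List.isChain_cons_cons.1 hch).1 with rfl | rfl | rfl
    · exact ⟨cs, by rw [hc, walkOfStarts.cons_eq_of_horizontal hnot (.inl rfl)]⟩
    · exact ⟨a :: cs, by rw [hc, walkOfStarts.cons_eq_of_vertical]⟩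
    · exact ⟨cs, by rw [hc, walkOfStarts.cons_eq_of_horizontal hnot (.inr rfl)]⟩

namespace IsOPath

variable {n : ℕ} {v : List (ℤ × ℤ)}

theorem eq_walkOfStarts (hv : IsOPath n v) : v = walkOfStarts n 0 0 (upStepStarts v) := by
  obtain ⟨hhead, hlast, hnd, -, hch⟩ := hv
  obtain ⟨cs, rfl⟩ := exists_eq_walkOfStarts hhead hlast hnd hch
  rw [walkOfStarts.upStepStarts_eq]

theorem length_upStepStarts (hv : IsOPath n v) : (upStepStarts v).length = n := by
  have hlast := hv.2.1
  rw [hv.eq_walkOfStarts, walkOfStarts.getLast?] at hlast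
  simpa [eq_comm] using hlast

theorem abs_getElem_upStepStarts_le (hv : IsOPath n v) (i : ℕ) (h : i < (upStepStarts v).length) :
    |(upStepStarts v)[i]| ≤ i := by
  have hmem := walkOfStarts.getElem_mem (e := n) (y := 0) (a := 0) i h
  rw [← hv.eq_walkOfStarts, zero_add] at hmem
  exact abs_le.2 (hv.2.2.2.1 _ hmem).symm

end IsOPath

theorem isOPath_walkOfStarts {n : ℕ} {cs : List ℤ} (hlen : cs.length = n)
    (hcs : ∀ i (h : i < cs.length), |cs[i]| ≤ i) : IsOPath n (walkOfStarts n 0 0 cs) := by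
  refine ⟨walkOfStarts.head? _ _ _, by simp [walkOfStarts.getLast?, hlen],
    walkOfStarts.nodup _ _ _, fun p hp => (abs_le.1 ?_).symm, walkOfStarts.isChain_step _ _ _⟩
  exact walkOfStarts.abs_fst_le_snd_of_mem (by simp) (by simpa using hcs) (by simp [hlen]) p hp

theorem bijOn_upStepStarts (n : ℕ) :
    Set.BijOn upStepStarts {v | IsOPath n v}
      {cs | cs.length = n ∧ ∀ i (h : i < cs.length), |cs[i]| ≤ i} :=
  Set.InvOn.bijOn (f' := walkOfStarts n 0 0)
    ⟨fun _ hv => (IsOPath.eq_walkOfStarts hv).symm, fun _ _ => walkOfStarts.upStepStarts_eq _ _ _⟩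
    (fun _ hv => ⟨hv.length_upStepStarts, hv.abs_getElem_upStepStarts_le⟩)
    (fun _ hcs => isOPath_walkOfStarts hcs.1 hcs.2)

theorem List.bijOn_getD {α : Type*} (n : ℕ) (d : α) (P : ℕ → α → Prop) :
    Set.BijOn (fun l : List α => fun i : Fin n => l.getD i d)
      {l | l.length = n ∧ ∀ i (h : i < l.length), P i l[i]} {f | ∀ i : Fin n, P i (f i)} := by
  refine Set.InvOn.bijOn (f' := List.ofFn) ⟨fun l hl => ?_, fun f _ => ?_⟩ (fun l hl i => ?_)
    (fun f hf => ⟨List.length_ofFn, fun i h => ?_⟩)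
  · refine List.ext_getElem (by simp [hl.1]) fun i _ h => ?_
    simp [List.getElem?_eq_getElem h]
  · ext i
    simp
  · have h : (i : ℕ) < l.length := hl.1 ▸ i.2
    simpa [List.getElem?_eq_getElem h] using hl.2 i h
  · simpa using hf ⟨i, by simpa using h⟩

/-- Every path in `O_n` has exactly `n` steps equal to `(0,1)`, and recording the
`x`-coordinates `(c_1, …, c_n)` of the starting points of these steps gives a bijection
from `O_n` onto the set of `n`-tuples with `1 - i ≤ c_i ≤ i - 1` for each `i`
(here the `i`-th entry, `1 ≤ i ≤ n`, is indexed by `i - 1 : Fin n`). -/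
theorem OPath_upSteps_bijection (n : ℕ) :
    (∀ v ∈ {v : List (ℤ × ℤ) | IsOPath n v}, (upStepStarts v).length = n) ∧
    Set.BijOn (fun v : List (ℤ × ℤ) => fun i : Fin n => (upStepStarts v).getD i 0)
      {v : List (ℤ × ℤ) | IsOPath n v}
      {c : Fin n → ℤ | ∀ i : Fin n, -((i : ℕ) : ℤ) ≤ c i ∧ c i ≤ ((i : ℕ) : ℤ)} := by
  have hup := bijOn_upStepStarts n
  refine ⟨fun v hv => (hup.mapsTo hv).1, ?_⟩
  have h := (List.bijOn_getD n 0 fun i (x : ℤ) => |x| ≤ i).comp hup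
  simp only [abs_le] at h
  exact h
end

section
/- For every natural number n, the map sending a noncrossing fixed-point-free involution f of Fin (2n) to the word w : Fin (2n) → ℤ defined by w i = 1 if i < f i and w i = −1 if f i < i is a bijection from the set of noncrossing fixed-point-free involutions of Fin (2n) onto the set of Dyck words of length 2n. -/
/-- A Brauer diagram of degree `n` encoded as a fixed-point-free involution of `Fin (2n)`. -/
def IsBrauerDiagram {m : ℕ} (f : Fin m → Fin m) : Prop :=
  (∀ i, f (f i) = i) ∧ ∀ i, f i ≠ i

/-- Two arcs `{a, f a}` and `{c, f c}` cross: `a < c < f a < f c` with `a < f a`, `c < f c`. -/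
def HasCrossing {m : ℕ} (f : Fin m → Fin m) : Prop :=
  ∃ a c : Fin m, a < f a ∧ c < f c ∧ a < c ∧ c < f a ∧ f a < f c

/-- The word of a fixed-point-free involution: `1` at left-hand ends of arcs,
`-1` at right-hand ends. -/
def wordOf {m : ℕ} (f : Fin m → Fin m) : Fin m → ℤ :=
  fun i => if i < f i then 1 else -1

/-- A Dyck word of length `m`: a `±1`-valued word with nonnegative partial sums and
total sum zero. -/
def IsDyckWord {m : ℕ} (w : Fin m → ℤ) : Prop :=
  (∀ i, w i = 1 ∨ w i = -1) ∧
  (∀ k : ℕ, 0 ≤ ∑ i ∈ Finset.univ.filter (fun i : Fin m => (i : ℕ) < k), w i) ∧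
  ∑ i, w i = 0

/-!
Write `h k = ∑_{i<k} w i` for the height of a word `w` after `k` letters. For the word of a
fixed-point-free involution `f`, `h k` is the number of arcs of `f` passing over the gap `k`, so
the word is a Dyck word. Conversely, in a Dyck word every letter `i` is an end of exactly one
arc `(i, j)` in the bracket-matching sense: `h (j + 1) = h i` and `h` stays strictly above `h i`
on the gaps `i + 1, …, j`; for an opening letter `i`, `j` is the first return of `h` to `h i`.
Two such arcs cannot cross, as the height at the gap after the inner right end would be both
equal to and strictly above the height at the outer left end.
If `f` is noncrossing, each arc `(i, f i)` is an arc in this sense: the arcs over a gap `t` with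
`i < t ≤ f i` include `(i, f i)` and all arcs over `i`, and the arcs over `f i + 1` are exactly
those over `i`. So matching the letters of the word recovers `f`.
-/

namespace TemperleyLieb

open Finset

variable {m : ℕ}

def height (w : Fin m → ℤ) (k : ℕ) : ℤ :=
  ∑ i ∈ univ.filter (fun i : Fin m => (i : ℕ) < k), w i

theorem height_zero (w : Fin m → ℤ) : height w 0 = 0 := by
  simp [height]

theorem height_succ (w : Fin m → ℤ) (i : Fin m) : height w (i + 1) = height w i + w i := by
  have : univ.filter (fun j : Fin m => (j : ℕ) < i + 1)
      = insert i (univ.filter fun j : Fin m => (j : ℕ) < i) := by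
    ext j
    simp only [mem_insert, mem_filter, mem_univ, true_and, Fin.ext_iff]
    omega
  rw [height, this, sum_insert (by simp), add_comm]
  rfl

theorem height_of_le (w : Fin m → ℤ) {k : ℕ} (hk : m ≤ k) : height w k = ∑ i, w i := by
  rw [height, filter_true_of_mem fun i _ => i.isLt.trans_le hk]

theorem abs_height_succ_sub_le {w : Fin m → ℤ} (hw : ∀ i, w i = 1 ∨ w i = -1) (k : ℕ) :
    |height w (k + 1) - height w k| ≤ 1 := by
  by_cases hk : k < m
  · have := height_succ w ⟨k, hk⟩
    rcases hw ⟨k, hk⟩ with h | h <;> simp_all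
  · rw [height_of_le w (by omega), height_of_le w (by omega)]
    simp

theorem exists_first_return (g : ℕ → ℤ) (hstep : ∀ k, g k - 1 ≤ g (k + 1)) {a b : ℕ}
    (hab : a < b) (hb : g b ≤ g a) (ha : g a < g (a + 1)) :
    ∃ j, a < j ∧ j < b ∧ g (j + 1) = g a ∧ ∀ t, a < t → t ≤ j → g a < g t := by
  have hb' : a < b - 1 := by
    rcases (show b = a + 1 ∨ a + 1 < b by omega) with rfl | _ <;> omega
  have hex : ∃ j, a < j ∧ g (j + 1) ≤ g a :=
    ⟨b - 1, hb', by rwa [Nat.sub_add_cancel (by omega)]⟩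
  have above : ∀ t, a < t → t ≤ Nat.find hex → g a < g t := by
    intro t h1 h2
    rcases (show t = a + 1 ∨ a + 1 < t by omega) with rfl | h
    · exact ha
    · have := Nat.find_min hex (show t - 1 < Nat.find hex by omega)
      rw [not_and, not_le, Nat.sub_add_cancel (by omega)] at this
      exact this (by omega)
  obtain ⟨hj, hjle⟩ := Nat.find_spec hex
  refine ⟨Nat.find hex, hj, ?_, le_antisymm hjle ?_, above⟩
  · have := Nat.find_min' hex ⟨hb', by rwa [Nat.sub_add_cancel (by omega)]⟩
    omega
  · have := above _ hj le_rfl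
    have := hstep (Nat.find hex)
    omega

-- `exists_first_return` applied to `g` read backwards from `b + 1`.
theorem exists_last_departure (g : ℕ → ℤ) (hstep : ∀ k, g (k + 1) ≤ g k + 1) {b : ℕ}
    (h0 : g 0 ≤ g (b + 1)) (hb : g (b + 1) < g b) :
    ∃ a, a < b ∧ g (b + 1) = g a ∧ ∀ t, a < t → t ≤ b → g (b + 1) < g t := by
  have hstep' : ∀ k, g (b + 1 - k) - 1 ≤ g (b + 1 - (k + 1)) := fun k => by
    rcases (show k ≤ b ∨ b < k by omega) with hk | hk
    · have := hstep (b - k)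
      rw [show b - k + 1 = b + 1 - k by omega] at this
      rw [show b + 1 - (k + 1) = b - k by omega]
      omega
    · rw [show b + 1 - k = 0 by omega, show b + 1 - (k + 1) = 0 by omega]
      omega
  obtain ⟨r, hr0, hrb, hr, above⟩ := exists_first_return (fun k => g (b + 1 - k)) hstep'
    (a := 0) (b := b + 1) (by omega) (by simpa using h0) (by simpa using hb)
  refine ⟨b - r, by omega, ?_, fun t h1 h2 => ?_⟩
  · simpa [show b + 1 - (r + 1) = b - r by omega] using hr.symm
  · simpa [show b + 1 - (b + 1 - t) = t by omega] using above (b + 1 - t) (by omega) (by omega)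

def IsArc (w : Fin m → ℤ) (i j : Fin m) : Prop :=
  i < j ∧ height w (j + 1) = height w i ∧
    ∀ t : ℕ, (i : ℕ) < t → t ≤ j → height w i < height w t

namespace IsArc

variable {w : Fin m → ℤ} {a b c d : Fin m}

theorem left_pos (h : IsArc w a b) : 0 < w a := by
  have := h.2.2 (a + 1) (by omega) h.1
  rw [height_succ] at this
  omega

theorem right_neg (h : IsArc w a b) : w b < 0 := by
  have := h.2.2 b h.1 le_rfl
  have := height_succ w b
  have := h.2.1
  omega

theorem right_le (h₁ : IsArc w a b) (h₂ : IsArc w a d) : b ≤ d := by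
  by_contra! hdb
  have := h₁.2.2 (d + 1) (by have := h₂.1; omega) hdb
  have := h₂.2.1
  omega

theorem right_unique (h₁ : IsArc w a b) (h₂ : IsArc w a d) : b = d :=
  le_antisymm (h₁.right_le h₂) (h₂.right_le h₁)

theorem left_unique (h₁ : IsArc w a b) (h₂ : IsArc w c b) : a = c := by
  wlog hac : a < c generalizing a c
  · rcases (not_lt.mp hac).lt_or_eq with hca | hca
    · exact (this h₂ h₁ hca).symm
    · exact hca.symm
  have := h₁.2.2 c hac h₂.1.le
  have := h₁.2.1
  have := h₂.2.1
  omega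

theorem not_crossing (h₁ : IsArc w a b) (h₂ : IsArc w c d) (hac : a < c) (hcb : c < b) :
    ¬ b < d := by
  intro hbd
  have := h₁.2.2 c hac hcb.le
  have := h₂.2.2 (b + 1) (by omega) hbd
  have := h₁.2.1
  omega

end IsArc

-- A letter lying on no arc is sent to itself; in a Dyck word every letter lies on an arc.
open Classical in
noncomputable def dyckMatch (w : Fin m → ℤ) (i : Fin m) : Fin m :=
  if h : ∃ j, IsArc w i j ∨ IsArc w j i then h.choose else i

variable {w : Fin m → ℤ} {i j : Fin m}

theorem IsArc.dyckMatch_left (h : IsArc w i j) : dyckMatch w i = j := by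
  have hex : ∃ j, IsArc w i j ∨ IsArc w j i := ⟨j, .inl h⟩
  rw [dyckMatch, dif_pos hex]
  rcases hex.choose_spec with h' | h'
  · exact h'.right_unique h
  · exact absurd h.left_pos (not_lt.mpr h'.right_neg.le)

theorem IsArc.dyckMatch_right (h : IsArc w i j) : dyckMatch w j = i := by
  have hex : ∃ k, IsArc w j k ∨ IsArc w k j := ⟨i, .inr h⟩
  rw [dyckMatch, dif_pos hex]
  rcases hex.choose_spec with h' | h'
  · exact absurd h'.left_pos (not_lt.mpr h.right_neg.le)
  · exact h'.left_unique h

theorem exists_isArc (hw : IsDyckWord w) (i : Fin m) : ∃ j, IsArc w i j ∨ IsArc w j i := by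
  have hstep := fun k => abs_le.mp (abs_height_succ_sub_le hw.1 k)
  rcases hw.1 i with hi | hi
  · obtain ⟨j, hij, hjm, hj, above⟩ := exists_first_return (height w)
      (fun k => by linarith [hstep k]) i.isLt
      (by rw [height_of_le w le_rfl, hw.2.2]; exact hw.2.1 i)
      (by rw [height_succ, hi]; omega)
    exact ⟨⟨j, hjm⟩, .inl ⟨hij, hj, above⟩⟩
  · obtain ⟨j, hji, hj, above⟩ := exists_last_departure (height w)
      (fun k => by linarith [hstep k]) (by rw [height_zero]; exact hw.2.1 _)
      (by rw [height_succ, hi]; omega)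
    refine ⟨⟨j, by omega⟩, .inr ⟨hji, hj, fun t h1 h2 => ?_⟩⟩
    rw [← hj]
    exact above t h1 h2

theorem isArc_or_isArc_dyckMatch (hw : IsDyckWord w) (i : Fin m) :
    IsArc w i (dyckMatch w i) ∨ IsArc w (dyckMatch w i) i := by
  obtain ⟨j, h | h⟩ := exists_isArc hw i
  · exact .inl (h.dyckMatch_left ▸ h)
  · exact .inr (h.dyckMatch_right ▸ h)

theorem isArc_dyckMatch (hw : IsDyckWord w) (hi : i < dyckMatch w i) :
    IsArc w i (dyckMatch w i) :=
  (isArc_or_isArc_dyckMatch hw i).resolve_right fun h => lt_asymm h.1 hi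

theorem isBrauerDiagram_dyckMatch (hw : IsDyckWord w) : IsBrauerDiagram (dyckMatch w) := by
  refine ⟨fun i => ?_, fun i => ?_⟩ <;> rcases isArc_or_isArc_dyckMatch hw i with h | h
  · exact h.dyckMatch_right
  · exact h.dyckMatch_left
  · exact h.1.ne'
  · exact h.1.ne

theorem not_hasCrossing_dyckMatch (hw : IsDyckWord w) : ¬ HasCrossing (dyckMatch w) :=
  fun ⟨_, _, ha, hc, hac, hcb, hbd⟩ =>
    (isArc_dyckMatch hw ha).not_crossing (isArc_dyckMatch hw hc) hac hcb hbd

theorem wordOf_dyckMatch (hw : IsDyckWord w) : wordOf (dyckMatch w) = w := by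
  funext i
  rcases isArc_or_isArc_dyckMatch hw i with h | h
  · rw [wordOf, if_pos h.1]
    have := h.left_pos
    rcases hw.1 i with hi | hi <;> omega
  · rw [wordOf, if_neg (lt_asymm h.1)]
    have := h.right_neg
    rcases hw.1 i with hi | hi <;> omega

def arcsOver (f : Fin m → Fin m) (k : ℕ) : Finset (Fin m) :=
  univ.filter fun a => (a : ℕ) < k ∧ k ≤ (f a : ℕ)

variable {f : Fin m → Fin m}

theorem height_wordOf (hf : IsBrauerDiagram f) (k : ℕ) :
    height (wordOf f) k = #(arcsOver f k) := by
  simp only [height, wordOf, sum_ite, sum_const, nsmul_eq_mul, mul_one, mul_neg_one]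
  set S := univ.filter fun i : Fin m => (i : ℕ) < k
  have hclosers :
      #(S.filter fun i => ¬ i < f i) = #(S.filter fun a => a < f a ∧ (f a : ℕ) < k) := by
    refine card_nbij' f f (fun i hi => ?_) (fun a ha => ?_) (fun i _ => hf.1 i)
      (fun a _ => hf.1 a)
    · simp only [S, mem_coe, mem_filter, mem_univ, true_and] at hi ⊢
      have : f i < i := lt_of_le_of_ne (not_lt.mp hi.2) (hf.2 i)
      rw [hf.1]
      exact ⟨by omega, this, hi.1⟩
    · simp only [S, mem_coe, mem_filter, mem_univ, true_and] at ha ⊢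
      rw [hf.1]
      exact ⟨ha.2.2, not_lt.mpr ha.2.1.le⟩
  have hopeners : #(S.filter fun a => a < f a)
      = #(S.filter fun a => a < f a ∧ (f a : ℕ) < k) + #(arcsOver f k) := by
    rw [← card_filter_add_card_filter_not (p := fun a => (f a : ℕ) < k), filter_filter,
      filter_filter]
    congr 2
    ext a
    simp only [S, arcsOver, mem_filter, mem_univ, true_and, Fin.lt_def]
    omega
  rw [hclosers, hopeners]
  push_cast
  ring

theorem isDyckWord_wordOf (hf : IsBrauerDiagram f) : IsDyckWord (wordOf f) := by
  refine ⟨fun i => ?_, fun k => ?_, ?_⟩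
  · unfold wordOf
    split_ifs <;> simp
  · change 0 ≤ height (wordOf f) k
    rw [height_wordOf hf]
    positivity
  · rw [← height_of_le _ le_rfl, height_wordOf hf, Nat.cast_eq_zero, card_eq_zero, arcsOver,
      filter_eq_empty_iff]
    exact fun a _ h => (f a).isLt.not_ge h.2

variable {i j : Fin m}

theorem lt_of_not_hasCrossing (hf : IsBrauerDiagram f) (hnc : ¬ HasCrossing f)
    (hi : i < f i) (hj : j < f j) (hij : i < j) (hji : j < f i) : f j < f i := by
  by_contra! h
  exact hnc ⟨i, j, hi, hj, hij, hji,
    h.lt_of_ne fun he => hij.ne (Function.Involutive.injective hf.1 he)⟩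

theorem lt_of_mem_arcsOver (hf : IsBrauerDiagram f) (hnc : ¬ HasCrossing f) (hi : i < f i)
    {a : Fin m} (ha : a ∈ arcsOver f i) : f i < f a := by
  simp only [arcsOver, mem_filter, mem_univ, true_and] at ha
  have hfa : (f a : ℕ) ≠ i := fun h => by
    have := hf.1 a
    rw [Fin.ext h] at this
    omega
  exact lt_of_not_hasCrossing hf hnc (by omega) hi ha.1 (by omega)

theorem insert_arcsOver_subset (hf : IsBrauerDiagram f) (hnc : ¬ HasCrossing f)
    (hi : i < f i) {t : ℕ} (hit : i < t) (hti : t ≤ f i) :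
    insert i (arcsOver f i) ⊆ arcsOver f t := by
  intro a ha
  rcases mem_insert.mp ha with rfl | ha
  · simpa [arcsOver] using ⟨hit, hti⟩
  · have := lt_of_mem_arcsOver hf hnc hi ha
    simp only [arcsOver, mem_filter, mem_univ, true_and] at ha ⊢
    omega

theorem arcsOver_succ_eq (hf : IsBrauerDiagram f) (hnc : ¬ HasCrossing f) (hi : i < f i) :
    arcsOver f (f i + 1) = arcsOver f i := by
  ext a
  simp only [arcsOver, mem_filter, mem_univ, true_and]
  constructor
  · rintro ⟨ha, hfa⟩
    have hai : a < i := by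
      by_contra! hia
      have hane : a ≠ f i := fun h => by rw [h, hf.1] at hfa; omega
      rcases hia.lt_or_eq with hia | rfl
      · have := lt_of_not_hasCrossing hf hnc hi (by omega) hia (by omega)
        omega
      · omega
    exact ⟨hai, by omega⟩
  · intro ha
    have := lt_of_mem_arcsOver hf hnc hi (by simpa [arcsOver] using ha)
    omega

theorem isArc_wordOf (hf : IsBrauerDiagram f) (hnc : ¬ HasCrossing f) (hi : i < f i) :
    IsArc (wordOf f) i (f i) := by
  refine ⟨hi, ?_, fun t hit hti => ?_⟩
  · rw [height_wordOf hf, height_wordOf hf, arcsOver_succ_eq hf hnc hi]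
  · rw [height_wordOf hf, height_wordOf hf, Nat.cast_lt]
    exact card_lt_card <| (ssubset_insert (by simp [arcsOver])).trans_subset
      (insert_arcsOver_subset hf hnc hi hit hti)

theorem dyckMatch_wordOf (hf : IsBrauerDiagram f) (hnc : ¬ HasCrossing f) :
    dyckMatch (wordOf f) = f := by
  funext i
  rcases (hf.2 i).lt_or_gt with hi | hi
  · have hfi : f i < f (f i) := by rwa [hf.1]
    simpa only [hf.1 i] using (isArc_wordOf hf hnc hfi).dyckMatch_right
  · exact (isArc_wordOf hf hnc hi).dyckMatch_left

end TemperleyLieb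

open TemperleyLieb in
/-- Taking the word of a diagram is a bijection from noncrossing fixed-point-free
involutions of `Fin (2n)` (Temperley–Lieb diagrams) onto Dyck words of length `2n`. -/
theorem TL_dyckWord_bijection (n : ℕ) :
    Set.BijOn (fun f : Fin (2 * n) → Fin (2 * n) => wordOf f)
      {f : Fin (2 * n) → Fin (2 * n) | IsBrauerDiagram f ∧ ¬ HasCrossing f}
      {w : Fin (2 * n) → ℤ | IsDyckWord w} :=
  Set.InvOn.bijOn (f' := dyckMatch)
    ⟨fun _ hf => dyckMatch_wordOf hf.1 hf.2, fun _ hw => wordOf_dyckMatch hw⟩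
    (fun _ hf => isDyckWord_wordOf hf.1)
    (fun _ hw => ⟨isBrauerDiagram_dyckMatch hw, not_hasCrossing_dyckMatch hw⟩)
end

section
/- For every natural number n, the number of noncrossing fixed-point-free involutions of Fin (2n) equals the n-th Catalan number. -/
abbrev TLD (n : ℕ) := {f : Fin (2 * n) → Fin (2 * n) // IsBrauerDiagram f ∧ ¬ HasCrossing f}

namespace TLaux

/-- Glue two diagrams with a covering arc `(0, 2k+1)`. -/
def glueFun (n k : ℕ) (hk : k ≤ n) (g : Fin (2*k) → Fin (2*k))
    (h : Fin (2*(n-k)) → Fin (2*(n-k))) (x : Fin (2*(n+1))) : Fin (2*(n+1)) :=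
  if hx0 : x.val = 0 then ⟨2*k+1, by omega⟩
  else if hxj : x.val = 2*k+1 then ⟨0, by omega⟩
  else if hlt : x.val < 2*k+1 then
    ⟨(g ⟨x.val - 1, by omega⟩).val + 1,
      by have := (g ⟨x.val - 1, by omega⟩).isLt; omega⟩
  else
    ⟨(h ⟨x.val - (2*k+2), by have := x.isLt; omega⟩).val + (2*k+2),
      by have := (h ⟨x.val - (2*k+2), by have := x.isLt; omega⟩).isLt; omega⟩

variable {n k : ℕ} {hk : k ≤ n} {g : Fin (2*k) → Fin (2*k)} {h : Fin (2*(n-k)) → Fin (2*(n-k))}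

lemma glueFun_val_zero {x : Fin (2*(n+1))} (hx : x.val = 0) :
    (glueFun n k hk g h x).val = 2*k+1 := by
  rw [glueFun, dif_pos hx]

lemma glueFun_val_j {x : Fin (2*(n+1))} (hx : x.val = 2*k+1) :
    (glueFun n k hk g h x).val = 0 := by
  rw [glueFun, dif_neg (by omega), dif_pos hx]

lemma glueFun_val_in {x : Fin (2*(n+1))} (y : Fin (2*k)) (hy : y.val + 1 = x.val) :
    (glueFun n k hk g h x).val = (g y).val + 1 := by
  have hy2 := y.isLt
  have hx0 : ¬ x.val = 0 := by omega
  have hxj : ¬ x.val = 2*k+1 := by omega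
  have hlt : x.val < 2*k+1 := by omega
  rw [glueFun, dif_neg hx0, dif_neg hxj, dif_pos hlt]
  have hye : (⟨x.val - 1, by omega⟩ : Fin (2*k)) = y := Fin.ext (by simp; omega)
  simp only [Fin.val_mk]
  rw [hye]

lemma glueFun_val_out {x : Fin (2*(n+1))} (y : Fin (2*(n-k))) (hy : y.val + (2*k+2) = x.val) :
    (glueFun n k hk g h x).val = (h y).val + (2*k+2) := by
  have hy2 := y.isLt
  have hx0 : ¬ x.val = 0 := by omega
  have hxj : ¬ x.val = 2*k+1 := by omega
  have hlt : ¬ x.val < 2*k+1 := by omega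
  rw [glueFun, dif_neg hx0, dif_neg hxj, dif_neg hlt]
  have hye : (⟨x.val - (2*k+2), by have := x.isLt; omega⟩ : Fin (2*(n-k))) = y := Fin.ext (by simp; omega)
  simp only [Fin.val_mk]
  rw [hye]


lemma glueFun_isBrauer (hgB : IsBrauerDiagram g) (hhB : IsBrauerDiagram h) :
    IsBrauerDiagram (glueFun n k hk g h) := by
  constructor
  · intro x
    rcases Nat.lt_trichotomy x.val (2*k+1) with hx | hx | hx
    · rcases Nat.eq_zero_or_pos x.val with hx0 | hx0
      · have h1 : (glueFun n k hk g h x).val = 2*k+1 := glueFun_val_zero hx0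
        have h2 : (glueFun n k hk g h (glueFun n k hk g h x)).val = 0 := glueFun_val_j h1
        exact Fin.ext (by omega)
      · obtain ⟨y, hyv⟩ : ∃ y : Fin (2*k), y.val = x.val - 1 := ⟨⟨x.val - 1, by omega⟩, rfl⟩
        have h1 : (glueFun n k hk g h x).val = (g y).val + 1 := glueFun_val_in y (by omega)
        have h2 : (glueFun n k hk g h (glueFun n k hk g h x)).val = (g (g y)).val + 1 :=
          glueFun_val_in (g y) (by omega)
        rw [hgB.1 y] at h2
        exact Fin.ext (by omega)
    · have h1 : (glueFun n k hk g h x).val = 0 := glueFun_val_j hx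
      have h2 : (glueFun n k hk g h (glueFun n k hk g h x)).val = 2*k+1 :=
        glueFun_val_zero h1
      exact Fin.ext (by omega)
    · obtain ⟨y, hyv⟩ : ∃ y : Fin (2*(n-k)), y.val = x.val - (2*k+2) :=
        ⟨⟨x.val - (2*k+2), by have := x.isLt; omega⟩, rfl⟩
      have h1 : (glueFun n k hk g h x).val = (h y).val + (2*k+2) :=
        glueFun_val_out y (by omega)
      have h2 : (glueFun n k hk g h (glueFun n k hk g h x)).val = (h (h y)).val + (2*k+2) :=
        glueFun_val_out (h y) (by omega)
      rw [hhB.1 y] at h2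
      exact Fin.ext (by omega)
  · intro x hEq
    have hEq' := congrArg Fin.val hEq
    rcases Nat.lt_trichotomy x.val (2*k+1) with hx | hx | hx
    · rcases Nat.eq_zero_or_pos x.val with hx0 | hx0
      · have h1 : (glueFun n k hk g h x).val = 2*k+1 := glueFun_val_zero hx0
        omega
      · obtain ⟨y, hyv⟩ : ∃ y : Fin (2*k), y.val = x.val - 1 := ⟨⟨x.val - 1, by omega⟩, rfl⟩
        have h1 : (glueFun n k hk g h x).val = (g y).val + 1 := glueFun_val_in y (by omega)
        exact hgB.2 y (Fin.ext (by omega))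
    · have h1 : (glueFun n k hk g h x).val = 0 := glueFun_val_j hx
      omega
    · obtain ⟨y, hyv⟩ : ∃ y : Fin (2*(n-k)), y.val = x.val - (2*k+2) :=
        ⟨⟨x.val - (2*k+2), by have := x.isLt; omega⟩, rfl⟩
      have h1 : (glueFun n k hk g h x).val = (h y).val + (2*k+2) :=
        glueFun_val_out y (by omega)
      exact hhB.2 y (Fin.ext (by omega))

lemma glueFun_not_hasCrossing (hg : ¬ HasCrossing g) (hh : ¬ HasCrossing h) :
    ¬ HasCrossing (glueFun n k hk g h) := by
  rintro ⟨a, c, h1, h2, h3, h4, h5⟩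
  rw [Fin.lt_def] at h1 h2 h3 h4 h5
  rcases Nat.lt_trichotomy a.val (2*k+1) with ha | ha | ha
  · rcases Nat.eq_zero_or_pos a.val with ha0 | ha0
    · -- a = 0, arc (0, 2k+1); c must be inside
      have hFa : (glueFun n k hk g h a).val = 2*k+1 := glueFun_val_zero ha0
      obtain ⟨c', hcv⟩ : ∃ c' : Fin (2*k), c'.val = c.val - 1 := ⟨⟨c.val - 1, by omega⟩, rfl⟩
      have hFc : (glueFun n k hk g h c).val = (g c').val + 1 := glueFun_val_in c' (by omega)
      have := (g c').isLt
      omega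
    · -- a inside
      obtain ⟨a', hav⟩ : ∃ a' : Fin (2*k), a'.val = a.val - 1 := ⟨⟨a.val - 1, by omega⟩, rfl⟩
      have hFa : (glueFun n k hk g h a).val = (g a').val + 1 := glueFun_val_in a' (by omega)
      have hga := (g a').isLt
      obtain ⟨c', hcv⟩ : ∃ c' : Fin (2*k), c'.val = c.val - 1 := ⟨⟨c.val - 1, by omega⟩, rfl⟩
      have hFc : (glueFun n k hk g h c).val = (g c').val + 1 := glueFun_val_in c' (by omega)
      exact hg ⟨a', c', by rw [Fin.lt_def]; omega, by rw [Fin.lt_def]; omega,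
        by rw [Fin.lt_def]; omega, by rw [Fin.lt_def]; omega, by rw [Fin.lt_def]; omega⟩
  · -- a = 2k+1 : F a = 0, contradiction with a < F a
    have hFa : (glueFun n k hk g h a).val = 0 := glueFun_val_j ha
    omega
  · -- a outside; then c outside too
    obtain ⟨a', hav⟩ : ∃ a' : Fin (2*(n-k)), a'.val = a.val - (2*k+2) :=
      ⟨⟨a.val - (2*k+2), by have := a.isLt; omega⟩, rfl⟩
    have hFa : (glueFun n k hk g h a).val = (h a').val + (2*k+2) :=
      glueFun_val_out a' (by omega)
    obtain ⟨c', hcv⟩ : ∃ c' : Fin (2*(n-k)), c'.val = c.val - (2*k+2) :=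
      ⟨⟨c.val - (2*k+2), by have := c.isLt; omega⟩, rfl⟩
    have hFc : (glueFun n k hk g h c).val = (h c').val + (2*k+2) :=
      glueFun_val_out c' (by omega)
    exact hh ⟨a', c', by rw [Fin.lt_def]; omega, by rw [Fin.lt_def]; omega,
      by rw [Fin.lt_def]; omega, by rw [Fin.lt_def]; omega, by rw [Fin.lt_def]; omega⟩

/-- Bundled glue map. -/
def glue (n k : ℕ) (hk : k ≤ n) (g : TLD k) (h : TLD (n-k)) : TLD (n+1) :=
  ⟨glueFun n k hk g.1 h.1,
    glueFun_isBrauer g.2.1 h.2.1,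
    glueFun_not_hasCrossing g.2.2 h.2.2⟩


section Split

variable {n : ℕ} (F : Fin (2*(n+1)) → Fin (2*(n+1)))

lemma maps_in (hB : IsBrauerDiagram F) (hN : ¬ HasCrossing F) {z x : Fin (2*(n+1))}
    (hz : z.val = 0) (hx0 : x.val ≠ 0) (hxj : x.val < (F z).val) :
    (F x).val ≠ 0 ∧ (F x).val < (F z).val := by
  have hFz0 : (F z).val ≠ 0 := fun hh => hB.2 z (Fin.ext (by omega))
  constructor
  · intro h0
    have hxz : x = F z := by
      have h1 : F x = z := Fin.ext (by omega)
      have h2 := congrArg F h1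
      rw [hB.1] at h2
      exact h2
    have := congrArg Fin.val hxz
    omega
  · by_contra hge
    push_neg at hge
    have hne : (F x).val ≠ (F z).val := by
      intro hh
      have hxz : x = z := by
        have h2 : F x = F z := Fin.ext hh
        have h3 := congrArg F h2
        rw [hB.1, hB.1] at h3
        exact h3
      have := congrArg Fin.val hxz
      omega
    exact hN ⟨z, x, by rw [Fin.lt_def]; omega, by rw [Fin.lt_def]; omega,
      by rw [Fin.lt_def]; omega, by rw [Fin.lt_def]; omega, by rw [Fin.lt_def]; omega⟩

lemma maps_out (hB : IsBrauerDiagram F) (hN : ¬ HasCrossing F) {z x : Fin (2*(n+1))}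
    (hz : z.val = 0) (hx : (F z).val < x.val) : (F z).val < (F x).val := by
  have hFz0 : (F z).val ≠ 0 := fun hh => hB.2 z (Fin.ext (by omega))
  have hFx0 : (F x).val ≠ 0 := by
    intro h0
    have hxz : x = F z := by
      have h1 : F x = z := Fin.ext (by omega)
      have h2 := congrArg F h1
      rw [hB.1] at h2
      exact h2
    have := congrArg Fin.val hxz
    omega
  have hne : (F x).val ≠ (F z).val := by
    intro hh
    have hxz : x = z := by
      have h2 : F x = F z := Fin.ext hh
      have h3 := congrArg F h2
      rw [hB.1, hB.1] at h3
      exact h3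
    have := congrArg Fin.val hxz
    omega
  by_contra hge
  push_neg at hge
  have hxx := congrArg Fin.val (hB.1 x)
  exact hN ⟨z, F x, by rw [Fin.lt_def]; omega, by rw [Fin.lt_def]; omega,
    by rw [Fin.lt_def]; omega, by rw [Fin.lt_def]; omega, by rw [Fin.lt_def]; omega⟩

lemma exists_split (hB : IsBrauerDiagram F) (hN : ¬ HasCrossing F) {z : Fin (2*(n+1))}
    (hz : z.val = 0) : ∃ k : ℕ, (F z).val = 2*k+1 ∧ k ≤ n := by
  classical
  have hj1 : (F z).val ≠ 0 := fun hh => hB.2 z (Fin.ext (by omega))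
  have hjlt : (F z).val < 2*(n+1) := (F z).isLt
  set S : Finset (Fin (2*(n+1))) :=
    Finset.univ.filter (fun x => x.val ≠ 0 ∧ x.val < (F z).val) with hS
  have hmemS : ∀ x : Fin (2*(n+1)), x ∈ S ↔ x.val ≠ 0 ∧ x.val < (F z).val := by
    intro x; simp [hS]
  have hcardS : S.card = (F z).val - 1 := by
    rw [← Nat.card_Ico 1 (F z).val]
    apply Finset.card_bij (fun x _ => x.val)
    · intro a ha
      rw [hmemS] at ha
      rw [Finset.mem_Ico]
      omega
    · intro a _ b _ hab
      exact Fin.ext hab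
    · intro b hb
      rw [Finset.mem_Ico] at hb
      exact ⟨⟨b, by omega⟩, by rw [hmemS]; constructor <;> simp <;> omega, rfl⟩
  have hABcard : (S.filter (fun x => x.val < (F x).val)).card
      = (S.filter (fun x => (F x).val < x.val)).card := by
    apply Finset.card_bij (fun x _ => F x)
    · intro a ha
      rw [Finset.mem_filter] at ha ⊢
      rw [hmemS] at ha ⊢
      have h1 := maps_in F hB hN hz ha.1.1 ha.1.2
      have h2 := congrArg Fin.val (hB.1 a)
      exact ⟨⟨h1.1, h1.2⟩, by omega⟩
    · intro a _ b _ hab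
      have := congrArg F hab
      rwa [hB.1, hB.1] at this
    · intro b hb
      rw [Finset.mem_filter] at hb
      rw [hmemS] at hb
      have h1 := maps_in F hB hN hz hb.1.1 hb.1.2
      have h2 := congrArg Fin.val (hB.1 b)
      refine ⟨F b, ?_, hB.1 b⟩
      rw [Finset.mem_filter, hmemS]
      exact ⟨⟨h1.1, h1.2⟩, by omega⟩
  have hsplit := Finset.card_filter_add_card_filter_not (s := S)
    (p := fun x : Fin (2*(n+1)) => x.val < (F x).val)
  have hBeq : (S.filter fun a => ¬ a.val < (F a).val)
      = S.filter (fun x => (F x).val < x.val) := by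
    apply Finset.filter_congr
    intro x hx
    have : (F x).val ≠ x.val := fun hh => hB.2 x (Fin.ext hh)
    simp only [not_lt, eq_iff_iff]
    constructor
    · intro h; omega
    · intro h; omega
  rw [hBeq] at hsplit
  exact ⟨(S.filter (fun x => x.val < (F x).val)).card, by omega, by omega⟩

lemma exists_glue (hB : IsBrauerDiagram F) (hN : ¬ HasCrossing F) :
    ∃ (k : ℕ) (hk : k ≤ n) (g : TLD k) (h : TLD (n-k)),
      TLaux.glueFun n k hk g.1 h.1 = F := by
  classical
  have hz : (⟨0, by omega⟩ : Fin (2*(n+1))).val = 0 := rfl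
  set z : Fin (2*(n+1)) := ⟨0, by omega⟩ with hzdef
  obtain ⟨k, hjk, hk⟩ := exists_split F hB hN hz
  -- inner function
  have keyg : ∀ x : Fin (2*k), ∃ v : Fin (2*k),
      ∀ y : Fin (2*(n+1)), y.val = x.val + 1 → v.val + 1 = (F y).val := by
    intro x
    have hx := x.isLt
    have pf : x.val + 1 < 2*(n+1) := by omega
    have h2 := maps_in F hB hN hz (x := ⟨x.val+1, pf⟩) (Nat.succ_ne_zero _)
      (by show x.val + 1 < (F z).val; omega)
    refine ⟨⟨(F ⟨x.val+1, pf⟩).val - 1, by omega⟩, ?_⟩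
    intro y hy
    have hyx : y = ⟨x.val+1, pf⟩ := Fin.ext (by simpa using hy)
    subst hyx
    simp only [Fin.val_mk]
    omega
  choose g hg using keyg
  have keyh : ∀ x : Fin (2*(n-k)), ∃ v : Fin (2*(n-k)),
      ∀ y : Fin (2*(n+1)), y.val = x.val + (2*k+2) → v.val + (2*k+2) = (F y).val := by
    intro x
    have hx := x.isLt
    have pf : x.val + (2*k+2) < 2*(n+1) := by omega
    have h2 := maps_out F hB hN hz (x := ⟨x.val + (2*k+2), pf⟩)
      (by show (F z).val < x.val + (2*k+2); omega)
    have h3 := (F ⟨x.val + (2*k+2), pf⟩).isLt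
    refine ⟨⟨(F ⟨x.val + (2*k+2), pf⟩).val - (2*k+2), by omega⟩, ?_⟩
    intro y hy
    have hyx : y = ⟨x.val + (2*k+2), pf⟩ := Fin.ext (by simpa using hy)
    subst hyx
    simp only [Fin.val_mk]
    omega
  choose h hh using keyh
  -- g is a TL diagram
  have hgB : IsBrauerDiagram g := by
    constructor
    · intro x
      have hx := x.isLt
      obtain ⟨y, hyv⟩ : ∃ y : Fin (2*(n+1)), y.val = x.val + 1 := ⟨⟨x.val+1, by omega⟩, rfl⟩
      have h1 := hg x y hyv
      have hgx := (g x).isLt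
      obtain ⟨y2, hy2v⟩ : ∃ y2 : Fin (2*(n+1)), y2.val = (g x).val + 1 :=
        ⟨⟨(g x).val + 1, by omega⟩, rfl⟩
      have h2 := hg (g x) y2 hy2v
      have hyF : y2 = F y := Fin.ext (by omega)
      rw [hyF] at h2
      have h3 := congrArg Fin.val (hB.1 y)
      exact Fin.ext (by omega)
    · intro x hEq
      have hx := x.isLt
      obtain ⟨y, hyv⟩ : ∃ y : Fin (2*(n+1)), y.val = x.val + 1 := ⟨⟨x.val+1, by omega⟩, rfl⟩
      have h1 := hg x y hyv
      have hEq' := congrArg Fin.val hEq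
      exact hB.2 y (Fin.ext (by omega))
  have hgN : ¬ HasCrossing g := by
    rintro ⟨a, c, h1, h2, h3, h4, h5⟩
    rw [Fin.lt_def] at h1 h2 h3 h4 h5
    have ha := a.isLt; have hc := c.isLt
    have hga := (g a).isLt; have hgc := (g c).isLt
    obtain ⟨ya, hyav⟩ : ∃ y : Fin (2*(n+1)), y.val = a.val + 1 := ⟨⟨a.val+1, by omega⟩, rfl⟩
    obtain ⟨yc, hycv⟩ : ∃ y : Fin (2*(n+1)), y.val = c.val + 1 := ⟨⟨c.val+1, by omega⟩, rfl⟩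
    have e1 := hg a ya hyav
    have e2 := hg c yc hycv
    exact hN ⟨ya, yc, by rw [Fin.lt_def]; omega, by rw [Fin.lt_def]; omega,
      by rw [Fin.lt_def]; omega, by rw [Fin.lt_def]; omega, by rw [Fin.lt_def]; omega⟩
  have hhB : IsBrauerDiagram h := by
    constructor
    · intro x
      have hx := x.isLt
      obtain ⟨y, hyv⟩ : ∃ y : Fin (2*(n+1)), y.val = x.val + (2*k+2) :=
        ⟨⟨x.val + (2*k+2), by omega⟩, rfl⟩
      have h1 := hh x y hyv
      have hgx := (h x).isLt
      obtain ⟨y2, hy2v⟩ : ∃ y2 : Fin (2*(n+1)), y2.val = (h x).val + (2*k+2) :=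
        ⟨⟨(h x).val + (2*k+2), by omega⟩, rfl⟩
      have h2 := hh (h x) y2 hy2v
      have hyF : y2 = F y := Fin.ext (by omega)
      rw [hyF] at h2
      have h3 := congrArg Fin.val (hB.1 y)
      exact Fin.ext (by omega)
    · intro x hEq
      have hx := x.isLt
      obtain ⟨y, hyv⟩ : ∃ y : Fin (2*(n+1)), y.val = x.val + (2*k+2) :=
        ⟨⟨x.val + (2*k+2), by omega⟩, rfl⟩
      have h1 := hh x y hyv
      have hEq' := congrArg Fin.val hEq
      exact hB.2 y (Fin.ext (by omega))
  have hhN : ¬ HasCrossing h := by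
    rintro ⟨a, c, h1, h2, h3, h4, h5⟩
    rw [Fin.lt_def] at h1 h2 h3 h4 h5
    have ha := a.isLt; have hc := c.isLt
    have hga := (h a).isLt; have hgc := (h c).isLt
    obtain ⟨ya, hyav⟩ : ∃ y : Fin (2*(n+1)), y.val = a.val + (2*k+2) :=
      ⟨⟨a.val + (2*k+2), by omega⟩, rfl⟩
    obtain ⟨yc, hycv⟩ : ∃ y : Fin (2*(n+1)), y.val = c.val + (2*k+2) :=
      ⟨⟨c.val + (2*k+2), by omega⟩, rfl⟩
    have e1 := hh a ya hyav
    have e2 := hh c yc hycv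
    exact hN ⟨ya, yc, by rw [Fin.lt_def]; omega, by rw [Fin.lt_def]; omega,
      by rw [Fin.lt_def]; omega, by rw [Fin.lt_def]; omega, by rw [Fin.lt_def]; omega⟩
  have hfinal : TLaux.glueFun n k hk g h = F := ?_
  · exact ⟨k, hk, ⟨g, hgB, hgN⟩, ⟨h, hhB, hhN⟩, hfinal⟩
  funext x
  apply Fin.ext
  rcases Nat.lt_trichotomy x.val (2*k+1) with hx | hx | hx
  · rcases Nat.eq_zero_or_pos x.val with hx0 | hx0
    · rw [TLaux.glueFun_val_zero hx0]
      have hxz : x = z := Fin.ext (by omega)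
      rw [hxz]
      omega
    · obtain ⟨x', hxv⟩ : ∃ x' : Fin (2*k), x'.val = x.val - 1 := ⟨⟨x.val - 1, by omega⟩, rfl⟩
      rw [TLaux.glueFun_val_in x' (by omega)]
      have := hg x' x (by omega)
      omega
  · rw [TLaux.glueFun_val_j hx]
    have hxz : x = F z := Fin.ext (by omega)
    rw [hxz]
    have h3 := congrArg Fin.val (hB.1 z)
    omega
  · have hxlt := x.isLt
    obtain ⟨x', hxv⟩ : ∃ x' : Fin (2*(n-k)), x'.val = x.val - (2*k+2) :=
      ⟨⟨x.val - (2*k+2), by omega⟩, rfl⟩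
    rw [TLaux.glueFun_val_out x' (by omega)]
    have := hh x' x (by omega)
    omega

end Split

lemma glueFun_inj_k {n k k' : ℕ} {hk : k ≤ n} {hk' : k' ≤ n}
    {g : Fin (2*k) → Fin (2*k)} {h : Fin (2*(n-k)) → Fin (2*(n-k))}
    {g' : Fin (2*k') → Fin (2*k')} {h' : Fin (2*(n-k')) → Fin (2*(n-k'))}
    (hEq : glueFun n k hk g h = glueFun n k' hk' g' h') : k = k' := by
  have h0 := congrArg Fin.val (congrFun hEq ⟨0, by omega⟩)
  rw [glueFun_val_zero rfl, glueFun_val_zero rfl] at h0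
  omega

lemma glueFun_inj_gh {n k : ℕ} {hk : k ≤ n}
    {g g' : Fin (2*k) → Fin (2*k)} {h h' : Fin (2*(n-k)) → Fin (2*(n-k))}
    (hEq : glueFun n k hk g h = glueFun n k hk g' h') : g = g' ∧ h = h' := by
  constructor
  · funext x
    have hx := x.isLt
    have e := congrArg Fin.val (congrFun hEq ⟨x.val + 1, by omega⟩)
    rw [glueFun_val_in (g := g) x rfl, glueFun_val_in (g := g') x rfl] at e
    exact Fin.ext (by omega)
  · funext x
    have hx := x.isLt
    have e := congrArg Fin.val (congrFun hEq ⟨x.val + (2*k+2), by omega⟩)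
    rw [glueFun_val_out (h := h) x rfl, glueFun_val_out (h := h') x rfl] at e
    exact Fin.ext (by omega)

lemma nat_card_sigma {ι : Type*} [Fintype ι] (α : ι → Type*) [∀ i, Finite (α i)] :
    Nat.card (Σ i, α i) = ∑ i, Nat.card (α i) := by
  letI := fun i => Fintype.ofFinite (α i)
  rw [Nat.card_eq_fintype_card, Fintype.card_sigma]
  exact Finset.sum_congr rfl fun i _ => (Nat.card_eq_fintype_card).symm

lemma card_succ (n : ℕ) :
    Nat.card (TLD (n+1)) = ∑ i : Fin (n+1), Nat.card (TLD i.val) * Nat.card (TLD (n - i.val)) := by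
  have hbij : Function.Bijective
      (fun p : (Σ i : Fin (n+1), TLD i.val × TLD (n - i.val)) =>
        glue n p.1.val (Nat.lt_succ_iff.mp p.1.isLt) p.2.1 p.2.2) := by
    constructor
    · rintro ⟨⟨k, hk⟩, ⟨g, hgP⟩, ⟨h, hhP⟩⟩ ⟨⟨k', hk'⟩, ⟨g', hgP'⟩, ⟨h', hhP'⟩⟩ hEq
      have hEq1 := congrArg Subtype.val hEq
      simp only [glue] at hEq1
      have hkk : k = k' := glueFun_inj_k hEq1
      subst hkk
      obtain ⟨hgg, hhh⟩ := glueFun_inj_gh hEq1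
      subst hgg
      subst hhh
      rfl
    · rintro ⟨F, hB, hN⟩
      obtain ⟨k, hk, g, h, hglue⟩ := exists_glue F hB hN
      exact ⟨⟨⟨k, by omega⟩, g, h⟩, Subtype.ext hglue⟩
  rw [← Nat.card_eq_of_bijective _ hbij, nat_card_sigma]
  exact Finset.sum_congr rfl fun i _ => Nat.card_prod _ _

end TLaux

theorem card_TL (n : ℕ) : Nat.card (TLD n) = catalan n := by
  induction n using Nat.strong_induction_on with
  | _ n ih =>
    match n with
    | 0 =>
      haveI : Unique (TLD 0) :=
        { default := ⟨fun x => x.elim0, ⟨fun i => i.elim0, fun i => i.elim0⟩,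
            by rintro ⟨a, -⟩; exact a.elim0⟩,
          uniq := fun f => Subtype.ext (funext fun i => i.elim0) }
      rw [Nat.card_unique, catalan_zero]
    | Nat.succ m =>
      rw [TLaux.card_succ m, catalan_succ]
      refine Finset.sum_congr rfl fun i _ => ?_
      have h1 := ih i.val (by omega)
      have h2 := ih (m - i.val) (by omega)
      rw [h1, h2]


/-- The number of noncrossing fixed-point-free involutions of `Fin (2n)`
(Temperley–Lieb diagrams of degree `n`) is the `n`-th Catalan number. -/
theorem card_TLDiagrams (n : ℕ) :
    Nat.card {f : Fin (2 * n) → Fin (2 * n) // IsBrauerDiagram f ∧ ¬ HasCrossing f} =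
      catalan n := by
  exact card_TL n
end

section
/- Let f be a noncrossing fixed-point-free involution of Fin (2n) and g a noncrossing fixed-point-free involution of Fin (2m). Define h on Fin (2(n+m)) by h i = f i for i < 2n and h (2n + j) = 2n + g j for j < 2m. Then h is a noncrossing fixed-point-free involution of Fin (2(n+m)), and the word of h (defined by w i = 1 if i < h i and w i = −1 if h i < i) is the concatenation of the word of f followed by the word of g. -/
/-- Side-by-side concatenation of diagrams: `h i = f i` for `i < 2n`, and
`h (2n + j) = 2n + g j` for `j < 2m`. -/
def concatInv {n m : ℕ} (f : Fin (2 * n) → Fin (2 * n)) (g : Fin (2 * m) → Fin (2 * m)) :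
    Fin (2 * (n + m)) → Fin (2 * (n + m)) :=
  fun i =>
    if h : (i : ℕ) < 2 * n then
      ⟨(f ⟨(i : ℕ), h⟩ : ℕ), by have := (f ⟨(i : ℕ), h⟩).isLt; omega⟩
    else
      ⟨2 * n + (g ⟨(i : ℕ) - 2 * n, by have := i.isLt; omega⟩ : ℕ), by
        have := (g ⟨(i : ℕ) - 2 * n, by have := i.isLt; omega⟩).isLt; omega⟩

lemma concatInv_lt {n m : ℕ} (f : Fin (2 * n) → Fin (2 * n)) (g : Fin (2 * m) → Fin (2 * m))
    (i : Fin (2 * (n + m))) (h : (i : ℕ) < 2 * n) :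
    (concatInv f g i : ℕ) = (f ⟨(i : ℕ), h⟩ : ℕ) := by
  simp [concatInv, h]

lemma concatInv_ge {n m : ℕ} (f : Fin (2 * n) → Fin (2 * n)) (g : Fin (2 * m) → Fin (2 * m))
    (i : Fin (2 * (n + m))) (h : ¬ (i : ℕ) < 2 * n) :
    (concatInv f g i : ℕ) =
      2 * n + (g ⟨(i : ℕ) - 2 * n, by have := i.isLt; omega⟩ : ℕ) := by
  simp [concatInv, h]

/-- The side-by-side concatenation of two Temperley–Lieb diagrams is a Temperley–Lieb
diagram, and its word is the concatenation of the two words. -/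
theorem concat_TL (n m : ℕ) (f : Fin (2 * n) → Fin (2 * n)) (g : Fin (2 * m) → Fin (2 * m))
    (hfB : IsBrauerDiagram f) (hfNC : ¬ HasCrossing f)
    (hgB : IsBrauerDiagram g) (hgNC : ¬ HasCrossing g) :
    IsBrauerDiagram (concatInv f g) ∧ ¬ HasCrossing (concatInv f g) ∧
    ∀ i : Fin (2 * (n + m)),
      wordOf (concatInv f g) i =
        if h : (i : ℕ) < 2 * n then wordOf f ⟨(i : ℕ), h⟩
        else wordOf g ⟨(i : ℕ) - 2 * n, by have := i.isLt; omega⟩ := by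
  obtain ⟨hf1, hf2⟩ := hfB
  obtain ⟨hg1, hg2⟩ := hgB
  refine ⟨⟨?_, ?_⟩, ?_, ?_⟩
  · intro i
    by_cases h : (i : ℕ) < 2 * n
    · have h1 := concatInv_lt f g i h
      have h2 : (concatInv f g i : ℕ) < 2 * n := by rw [h1]; exact (f _).isLt
      apply Fin.ext
      rw [concatInv_lt f g _ h2]
      have : (⟨(concatInv f g i : ℕ), h2⟩ : Fin (2 * n)) = f ⟨(i : ℕ), h⟩ := Fin.ext h1
      rw [this, hf1]
    · have h1 := concatInv_ge f g i h
      have h2 : ¬ (concatInv f g i : ℕ) < 2 * n := by omega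
      apply Fin.ext
      rw [concatInv_ge f g _ h2]
      have : (⟨(concatInv f g i : ℕ) - 2 * n, by have := (concatInv f g i).isLt; omega⟩ :
          Fin (2 * m)) = g ⟨(i : ℕ) - 2 * n, by have := i.isLt; omega⟩ :=
        Fin.ext (by simp only [Fin.val_mk]; omega)
      rw [this, hg1]
      have := i.isLt
      simp only [Fin.val_mk]
      omega
  · intro i
    by_cases h : (i : ℕ) < 2 * n
    · have h1 := concatInv_lt f g i h
      intro hc
      exact hf2 ⟨(i : ℕ), h⟩ (Fin.ext (by rw [← h1, hc]))
    · have h1 := concatInv_ge f g i h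
      intro hc
      apply hg2 ⟨(i : ℕ) - 2 * n, by have := i.isLt; omega⟩
      apply Fin.ext
      have hc' := congrArg Fin.val hc
      simp only [Fin.val_mk]
      omega
  · rintro ⟨a, c, h1, h2, h3, h4, h5⟩
    rw [Fin.lt_def] at h1 h2 h3 h4 h5
    by_cases ha : (a : ℕ) < 2 * n
    · have hfa := concatInv_lt f g a ha
      have hc : (c : ℕ) < 2 * n := by
        have := (f ⟨(a:ℕ), ha⟩).isLt; omega
      have hfc := concatInv_lt f g c hc
      refine hfNC ⟨⟨a, ha⟩, ⟨c, hc⟩, ?_, ?_, ?_, ?_, ?_⟩ <;>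
        (rw [Fin.lt_def]; (try simp only [Fin.val_mk]); omega)
    · have hfa := concatInv_ge f g a ha
      have hc : ¬ (c : ℕ) < 2 * n := by omega
      have hfc := concatInv_ge f g c hc
      refine hgNC ⟨⟨(a:ℕ) - 2 * n, by have := a.isLt; omega⟩,
        ⟨(c:ℕ) - 2 * n, by have := c.isLt; omega⟩, ?_, ?_, ?_, ?_, ?_⟩ <;>
        (rw [Fin.lt_def]; (try simp only [Fin.val_mk]); omega)
  · intro i
    by_cases h : (i : ℕ) < 2 * n
    · have h1 := concatInv_lt f g i h
      simp only [wordOf, dif_pos h, Fin.lt_def, h1, Fin.val_mk]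
    · have h1 := concatInv_ge f g i h
      simp only [wordOf, dif_neg h, Fin.lt_def, h1, Fin.val_mk]
      split_ifs <;> omega
end
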